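/- arXiv:2301.09373 — 13 statements merged into one kernel-verified Lean document; each statement's English description precedes it below -/
import Mathlib

section
/- Let q be an odd prime power, f ∈ Fq[X], f ≠ X, a monic irreducible polynomial of degree n and order e, β ∈ F_{q^n} a root of f, and let C ∈ Fq[X] be the polynomial satisfying C(X²) = (−1)^n f(X)·f(−X). If C is irreducible, then C is the minimal polynomial of β² over Fq and the order of C equals e/gcd(e,2). -/
/-!
The polynomial `(-1)^n f(X) f(-X)` is monic with `β` as a root, so `C` is monic with `β²` as a
root; being irreducible, it is the minimal polynomial of `β²`. For any `x`, the minimal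
polynomial of `x` divides `X^m - 1` exactly when `x^m = 1`, so the order of an irreducible
polynomial is the multiplicative order of its roots, and `orderOf (β²) = orderOf β / gcd (orderOf β) 2`.
-/

open Polynomial

theorem isLeast_pow_eq_one_iff {G : Type*} [Monoid G] {x : G} {e : ℕ} :
    IsLeast {m | 0 < m ∧ x ^ m = 1} e ↔ 0 < e ∧ orderOf x = e := by
  have isLeast_orderOf (hx : IsOfFinOrder x) : IsLeast {m | 0 < m ∧ x ^ m = 1} (orderOf x) :=
    ⟨⟨hx.orderOf_pos, pow_orderOf_eq_one x⟩, fun m ⟨hm, h⟩ ↦ orderOf_le_of_pow_eq_one hm h⟩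
  constructor
  · intro he
    have hx : IsOfFinOrder x := isOfFinOrder_iff_pow_eq_one.mpr ⟨e, he.1⟩
    exact ⟨he.1.1, (isLeast_orderOf hx).unique he⟩
  · rintro ⟨he, rfl⟩
    exact isLeast_orderOf (orderOf_pos_iff.mp he)

namespace Polynomial

theorem Monic.of_comp_X_pow {R : Type*} [Semiring R] [NoZeroDivisors R] {p : R[X]} {k : ℕ}
    (hk : k ≠ 0) (h : (p.comp (X ^ k)).Monic) : p.Monic := by
  nontriviality R
  rw [Monic, ← h.leadingCoeff, leadingCoeff_comp (by simpa using hk)]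
  simp

theorem minpoly_dvd_X_pow_sub_one_iff {F E : Type*} [Field F] [Ring E] [Algebra F E]
    {x : E} {m : ℕ} : minpoly F x ∣ X ^ m - 1 ↔ x ^ m = 1 := by
  rw [minpoly.dvd_iff, map_sub, map_pow, aeval_X, map_one, sub_eq_zero]

end Polynomial

theorem stmt1_general {F E : Type*} [Field F] [Field E] [Algebra F E]
    (f : F[X]) (n e : ℕ) (hmonic : f.Monic) (hirr : Irreducible f)
    (hdeg : f.natDegree = n)
    (he : IsLeast {e' : ℕ | 0 < e' ∧ f ∣ X ^ e' - 1} e)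
    (β : E) (hβ : aeval β f = 0)
    (C : F[X]) (hC : C.comp (X ^ 2) = (-1) ^ n * (f * f.comp (-X)))
    (hCirr : Irreducible C) :
    C = minpoly F (β ^ 2) ∧
      IsLeast {e' : ℕ | 0 < e' ∧ C ∣ X ^ e' - 1} (e / Nat.gcd e 2) := by
  have hCmonic : C.Monic := by
    refine Monic.of_comp_X_pow two_ne_zero ?_
    rw [hC, mul_left_comm]
    exact hmonic.mul (hdeg ▸ hmonic.neg_one_pow_natDegree_mul_comp_neg_X)
  have hCroot : aeval (β ^ 2) C = 0 := by
    simpa [aeval_comp, hβ] using congrArg (aeval β) hC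
  have hCmin : C = minpoly F (β ^ 2) := minpoly.eq_of_irreducible_of_monic hCirr hCroot hCmonic
  refine ⟨hCmin, ?_⟩
  rw [minpoly.eq_of_irreducible_of_monic hirr hβ hmonic] at he
  simp_rw [hCmin, minpoly_dvd_X_pow_sub_one_iff, isLeast_pow_eq_one_iff] at he ⊢
  obtain ⟨he0, rfl⟩ := he
  have hβfin : IsOfFinOrder β := orderOf_pos_iff.mp he0
  rw [← hβfin.orderOf_pow]
  exact ⟨hβfin.pow.orderOf_pos, rfl⟩

/-- Let `q` be an odd prime power, `f ∈ F_q[X]`, `f ≠ X`, monic irreducible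
of degree `n` and order `e`, `β ∈ F_{q^n}` a root of `f`, and `C ∈ F_q[X]` the polynomial
with `C(X²) = (−1)^n f(X) f(−X)`. If `C` is irreducible, then `C` is the minimal polynomial
of `β²` over `F_q` and the order of `C` equals `e / gcd(e,2)`. -/
theorem stmt1 {F E : Type*} [Field F] [Fintype F] [Field E] [Algebra F E]
    (hq : Odd (Fintype.card F))
    (f : F[X]) (n e : ℕ) (hmonic : f.Monic) (hirr : Irreducible f) (hfX : f ≠ X)
    (hdeg : f.natDegree = n)
    (he : IsLeast {e' : ℕ | 0 < e' ∧ f ∣ X ^ e' - 1} e)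
    (β : E) (hβ : aeval β f = 0)
    (C : F[X]) (hC : C.comp (X ^ 2) = (-1) ^ n * (f * f.comp (-X)))
    (hCirr : Irreducible C) :
    C = minpoly F (β ^ 2) ∧
      IsLeast {e' : ℕ | 0 < e' ∧ C ∣ X ^ e' - 1} (e / Nat.gcd e 2) :=
  stmt1_general f n e hmonic hirr hdeg he β hβ C hC hCirr
end

section
/- Let q be an odd prime power, f ∈ Fq[X], f ≠ X, a monic irreducible polynomial of degree n, and let C ∈ Fq[X] be the polynomial satisfying C(X²) = (−1)^n f(X)·f(−X). Then C is irreducible over Fq if and only if there does not exist a polynomial D ∈ Fq[X] such that f(X) = D(X²). -/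
open Polynomial IntermediateField

/-!
Let `α` be a root of `f`, so that `f` is the minimal polynomial of `α`, and let `m` be the
minimal polynomial of `α²`. Since `α²` is a root of `C`, `m ∣ C`; since `α` is a root of
`m(X²)`, `f ∣ m(X²)`. As `F(α²) ⊆ F(α)`, `deg m ∣ n`, and `n ≤ 2 deg m`. Hence either
`deg m = n`, and then the monic polynomial `C` of degree `n` equals `m` and is irreducible, or
`n = 2 deg m`, and then `f = m(X²)`. Conversely, if `f = D(X²)` then `f(-X) = f`, `n` is even
and `C = D²` is not irreducible.
-/

section Minpoly

variable {F L : Type*} [Field F] [Field L] [Algebra F L]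

theorem natDegree_minpoly_dvd_of_mem_adjoin {α x : L} (hα : IsIntegral F α)
    (hx : x ∈ F⟮α⟯) :
    (minpoly F x).natDegree ∣ (minpoly F α).natDegree := by
  have := adjoin.finiteDimensional hα
  have hdvd := minpoly.degree_dvd (K := F) (x := (⟨x, hx⟩ : F⟮α⟯)) (.of_finite F _)
  rwa [← minpoly.algebraMap_eq (algebraMap F⟮α⟯ L).injective, adjoin.finrank hα] at hdvd

theorem minpoly_dvd_expand_minpoly_pow {A : Type*} [CommRing A] [Algebra F A] (α : A) (p : ℕ) :
    minpoly F α ∣ expand F p (minpoly F (α ^ p)) :=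
  minpoly.dvd F α (by rw [expand_aeval, minpoly.aeval])

theorem natDegree_minpoly_sq_eq_or_minpoly_eq_expand {α : L} (hα : IsIntegral F α) :
    (minpoly F (α ^ 2)).natDegree = (minpoly F α).natDegree ∨
      minpoly F α = expand F 2 (minpoly F (α ^ 2)) := by
  set m := minpoly F (α ^ 2)
  have hm : m.Monic := minpoly.monic (hα.pow 2)
  have hdvd : m.natDegree ∣ (minpoly F α).natDegree :=
    natDegree_minpoly_dvd_of_mem_adjoin hα (pow_mem (mem_adjoin_simple_self F α) 2)
  have hle : (minpoly F α).natDegree ≤ m.natDegree * 2 := by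
    rw [← natDegree_expand]
    exact natDegree_le_of_dvd (minpoly_dvd_expand_minpoly_pow α 2) (hm.expand two_pos).ne_zero
  obtain ⟨k, hk⟩ := hdvd
  have hk0 : k ≠ 0 := by
    rintro rfl
    exact (minpoly.natDegree_pos hα).ne' (by rw [hk, mul_zero])
  have hk2 : k ≤ 2 :=
    Nat.le_of_mul_le_mul_left (hk ▸ hle) (minpoly.natDegree_pos (hα.pow 2))
  obtain rfl | rfl : k = 1 ∨ k = 2 := by omega
  · exact .inl (by rw [hk, mul_one])
  · refine .inr (eq_of_monic_of_dvd_of_natDegree_le (minpoly.monic hα) (hm.expand two_pos)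
      (minpoly_dvd_expand_minpoly_pow α 2) ?_).symm
    rw [natDegree_expand, hk]

end Minpoly

namespace Polynomial

variable {R : Type*} [CommRing R]

theorem expand_two_comp_neg_X (D : R[X]) : (expand R 2 D).comp (-X) = expand R 2 D := by
  rw [expand_eq_comp_X_pow, comp_assoc]; simp

theorem eq_mul_self_of_expand_two_eq {C D : R[X]}
    (hC : expand R 2 C =
      (-1) ^ (expand R 2 D).natDegree * (expand R 2 D * (expand R 2 D).comp (-X))) :
    C = D * D := by
  rw [expand_two_comp_neg_X, natDegree_expand, (even_two.mul_left _).neg_one_pow, one_mul,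
    ← map_mul] at hC
  exact expand_injective two_pos hC

variable [IsDomain R]

theorem natDegree_neg_one_pow_natDegree_mul_comp_neg_X (f : R[X]) :
    ((-1) ^ f.natDegree * f.comp (-X)).natDegree = f.natDegree := by
  rw [← C_1, ← C_neg, ← C_pow, natDegree_C_mul (by simp), natDegree_comp]
  simp

theorem monic_and_natDegree_eq_of_expand_two_eq {f C : R[X]} (hf : f.Monic)
    (hC : expand R 2 C = (-1) ^ f.natDegree * (f * f.comp (-X))) :
    C.Monic ∧ C.natDegree = f.natDegree := by
  have hg := hf.neg_one_pow_natDegree_mul_comp_neg_X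
  rw [mul_left_comm] at hC
  refine ⟨(monic_expand_iff two_pos).1 (hC ▸ hf.mul hg), ?_⟩
  have hdeg := congrArg natDegree hC
  rw [natDegree_expand, hf.natDegree_mul hg,
    natDegree_neg_one_pow_natDegree_mul_comp_neg_X] at hdeg
  omega

end Polynomial

theorem irreducible_or_exists_eq_expand_two_of_expand_two_eq {F : Type*} [Field F]
    {f C : F[X]} (hf : f.Monic) (hirr : Irreducible f)
    (hC : expand F 2 C = (-1) ^ f.natDegree * (f * f.comp (-X))) :
    Irreducible C ∨ ∃ D, f = expand F 2 D := by
  have := Fact.mk hirr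
  set α := AdjoinRoot.root f
  have hα : IsIntegral F α := AdjoinRoot.isIntegral_root hirr.ne_zero
  have hfmin : minpoly F α = f := by
    rw [AdjoinRoot.minpoly_root hirr.ne_zero, hf.leadingCoeff, inv_one, map_one, mul_one]
  have hfα : aeval α f = 0 := AdjoinRoot.aeval_eq f ▸ AdjoinRoot.mk_self
  obtain ⟨hCmonic, hCdeg⟩ := monic_and_natDegree_eq_of_expand_two_eq hf hC
  have hmC : minpoly F (α ^ 2) ∣ C := minpoly.dvd F _ <| by
    rw [← expand_aeval, hC, map_mul, map_mul, hfα, zero_mul, mul_zero]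
  rcases natDegree_minpoly_sq_eq_or_minpoly_eq_expand hα with hdeg | hexp
  · left
    rw [eq_of_monic_of_dvd_of_natDegree_le (minpoly.monic (hα.pow 2)) hCmonic hmC
      (by rw [hdeg, hfmin, hCdeg])]
    exact minpoly.irreducible (hα.pow 2)
  · exact .inr ⟨_, hfmin ▸ hexp⟩

theorem stmt2_general {F : Type*} [Field F]
    (f : F[X]) (n : ℕ) (hmonic : f.Monic) (hirr : Irreducible f)
    (hdeg : f.natDegree = n)
    (C : F[X]) (hC : C.comp (X ^ 2) = (-1) ^ n * (f * f.comp (-X))) :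
    Irreducible C ↔ ¬ ∃ D : F[X], f = D.comp (X ^ 2) := by
  subst hdeg
  simp_rw [← expand_eq_comp_X_pow] at hC ⊢
  refine ⟨?_, fun hnoD => ?_⟩
  · rintro hCirr ⟨D, rfl⟩
    exact IsSquare.not_irreducible ⟨D, eq_mul_self_of_expand_two_eq hC⟩ hCirr
  · exact (irreducible_or_exists_eq_expand_two_of_expand_two_eq hmonic hirr hC).resolve_right hnoD

/-- Let `q` be an odd prime power, `f ∈ F_q[X]`, `f ≠ X`, monic irreducible
of degree `n`, and `C ∈ F_q[X]` the polynomial with `C(X²) = (−1)^n f(X) f(−X)`. Then `C` is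
irreducible over `F_q` iff there is no `D ∈ F_q[X]` with `f(X) = D(X²)`. -/
theorem stmt2 {F : Type*} [Field F] [Fintype F] (hq : Odd (Fintype.card F))
    (f : F[X]) (n : ℕ) (hmonic : f.Monic) (hirr : Irreducible f) (hfX : f ≠ X)
    (hdeg : f.natDegree = n)
    (C : F[X]) (hC : C.comp (X ^ 2) = (-1) ^ n * (f * f.comp (-X))) :
    Irreducible C ↔ ¬ ∃ D : F[X], f = D.comp (X ^ 2) :=
  stmt2_general f n hmonic hirr hdeg C hC
end

section
/- Let f ∈ Fq[X] be a monic irreducible polynomial of degree n and let β ∈ F_{q^n} be a root of f. Let k be a positive integer and set k' = k/gcd(q,k). Let ζ be a primitive k'-th root of unity in an extension field of Fq. Then the characteristic polynomial χ_{β^k} ∈ Fq[X] of β^k over Fq satisfies χ_{β^k}(X^k) = (−1)^{n(k+1)} ∏_{j=1}^{k} f(ζ^j X). -/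
open Polynomial IntermediateField

private lemma prod_range_shift_aux {M : Type*} [CommMonoidWithZero M] [IsCancelMulZero M]
    {G : ℕ → M} {m : ℕ} (hG : G m = G 0) (h0 : G 0 ≠ 0) :
    ∏ i ∈ Finset.range m, G (i + 1) = ∏ i ∈ Finset.range m, G i := by
  have h1 := (Finset.prod_range_succ' G m).symm.trans (Finset.prod_range_succ G m)
  rw [hG] at h1
  exact mul_right_cancel₀ h0 h1

private lemma prod_range_mul_periodic_aux {M : Type*} [CommMonoid M] {G : ℕ → M} {m : ℕ}
    (hper : ∀ i, G (i + m) = G i) (d : ℕ) :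
    ∏ i ∈ Finset.range (m * d), G i = (∏ i ∈ Finset.range m, G i) ^ d := by
  induction d with
  | zero => simp
  | succ d ih =>
      rw [Nat.mul_succ, Finset.prod_range_add, ih, pow_succ]
      congr 1
      refine Finset.prod_congr rfl fun i _ => ?_
      clear ih
      induction d with
      | zero => simp
      | succ d ih => rw [Nat.mul_succ, add_comm (m * d) m, add_assoc, add_comm m, hper, ih]

/-- Daykin, Theorem 1. Let `f ∈ F_q[X]` be monic irreducible of degree `n`,
`β` a root of `f` in an extension field, `k ≥ 1`, `k' = k / gcd(q,k)`, and `ζ` a primitive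
`k'`-th root of unity. Then the characteristic polynomial `χ_{β^k}(X) = ∏_{i=0}^{n-1}
(X − (β^k)^{q^i})` of `β^k` over `F_q` satisfies
`χ_{β^k}(X^k) = (−1)^{n(k+1)} ∏_{j=1}^{k} f(ζ^j X)`. -/
theorem stmt3 {F E : Type*} [Field F] [Fintype F] [Field E] [Algebra F E]
    (f : F[X]) (n : ℕ) (hmonic : f.Monic) (hirr : Irreducible f) (hdeg : f.natDegree = n)
    (β : E) (hβ : aeval β f = 0)
    (k : ℕ) (hk : 0 < k)
    (ζ : E) (hζ : IsPrimitiveRoot ζ (k / Nat.gcd (Fintype.card F) k)) :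
    (∏ i ∈ Finset.range n, (X - C ((β ^ k) ^ Fintype.card F ^ i))).comp (X ^ k)
      = (-1) ^ (n * (k + 1)) *
          ∏ j ∈ Finset.Icc 1 k, (f.map (algebraMap F E)).comp (C (ζ ^ j) * X) := by
  classical
  set q := Fintype.card F with hq
  -- characteristic data
  set p := ringChar F with hpdef
  haveI : CharP F p := ringChar.charP F
  have hp : p.Prime := CharP.char_is_prime F p
  haveI hpfact : Fact p.Prime := ⟨hp⟩
  haveI : CharP E p := charP_of_injective_algebraMap (algebraMap F E).injective p
  haveI : CharP E[X] p := Polynomial.instCharP p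
  obtain ⟨s, -, hcard⟩ := FiniteField.card F p
  have hq2 : 1 < q := Fintype.one_lt_card
  -- gcd data
  set d := Nat.gcd q k with hddef
  set k' := k / d with hk'def
  have hd_dvd_k : d ∣ k := Nat.gcd_dvd_right q k
  have hd_pos : 0 < d := Nat.gcd_pos_of_pos_right q hk
  have hkk' : k = k' * d := (Nat.div_mul_cancel hd_dvd_k).symm
  have hk'_pos : 0 < k' := Nat.div_pos (Nat.le_of_dvd hk hd_dvd_k) hd_pos
  have hdq : d ∣ p ^ (s : ℕ) := hcard ▸ Nat.gcd_dvd_left q k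
  obtain ⟨u, -, hdu⟩ := (Nat.dvd_prime_pow hp).mp hdq
  have hζk' : ζ ^ k' = 1 := hζ.pow_eq_one
  -- n is positive
  have hn : 0 < n := hdeg ▸ hirr.natDegree_pos
  -- Frobenius x ↦ x^q as an F-algebra hom on E
  have hqps : q = p ^ (s : ℕ) := hcard
  let φ : E →ₐ[F] E :=
    { toFun := fun x => x ^ q
      map_one' := one_pow q
      map_mul' := fun x y => mul_pow x y q
      map_zero' := zero_pow Fintype.card_ne_zero
      map_add' := fun x y => by
        show (x + y) ^ q = x ^ q + y ^ q
        rw [hqps]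
        exact add_pow_char_pow x y p (s : ℕ)
      commutes' := fun a => by
        show (algebraMap F E a) ^ q = algebraMap F E a
        rw [← map_pow, FiniteField.pow_card] }
  have hφ : ∀ x : E, φ x = x ^ q := fun _ => rfl
  -- f is the minimal polynomial of β
  have hint : IsIntegral F β := ⟨f, hmonic, hβ⟩
  have hmin : f = minpoly F β := minpoly.eq_of_irreducible_of_monic hirr hβ hmonic
  -- β ^ q ^ n = β
  have hβqn : β ^ q ^ n = β := by
    haveI : FiniteDimensional F F⟮β⟯ := IntermediateField.adjoin.finiteDimensional hint
    haveI : Finite F⟮β⟯ := Module.finite_of_finite F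
    haveI : Fintype F⟮β⟯ := Fintype.ofFinite _
    have hcardK : Fintype.card F⟮β⟯ = q ^ n := by
      rw [Module.card_eq_pow_finrank (K := F) (V := F⟮β⟯), IntermediateField.adjoin.finrank hint,
        ← hmin, hdeg]
    have hx := FiniteField.pow_card (IntermediateField.AdjoinSimple.gen F β)
    rw [hcardK] at hx
    have := congrArg (algebraMap F⟮β⟯ E) hx
    rwa [map_pow, IntermediateField.AdjoinSimple.algebraMap_gen] at this
  -- the candidate product
  set g : E[X] := ∏ i ∈ Finset.range n, (X - C (β ^ q ^ i)) with hgdef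
  set G : ℕ → E[X] := fun i => X - C (β ^ q ^ i) with hGdef
  have hG0 : G 0 ≠ 0 := by
    show X - C (β ^ q ^ 0) ≠ 0
    exact X_sub_C_ne_zero _
  have hGn : G n = G 0 := by
    show X - C (β ^ q ^ n) = X - C (β ^ q ^ 0)
    rw [hβqn, pow_zero, pow_one]
  -- g is fixed by the Frobenius on coefficients
  have hgfix : ∀ m : ℕ, g.coeff m ^ q = g.coeff m := by
    have hmapg : g.map (φ : E →+* E) = g := by
      rw [hgdef, Polynomial.map_prod]
      have : ∀ i ∈ Finset.range n, (X - C (β ^ q ^ i)).map (φ : E →+* E) = G (i + 1) := by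
        intro i _
        simp only [Polynomial.map_sub, map_X, map_C]
        show X - C ((β ^ q ^ i) ^ q) = X - C (β ^ q ^ (i + 1))
        rw [← pow_mul, ← pow_succ]
      rw [Finset.prod_congr rfl this]
      exact prod_range_shift_aux hGn hG0
    intro m
    conv_rhs => rw [← hmapg]
    rw [coeff_map]
    rfl
  -- elements fixed by x ↦ x^q are in the image of F
  have hfix : ∀ x : E, x ^ q = x → ∃ y : F, algebraMap F E y = x := by
    intro x hx
    by_contra hcon
    push_neg at hcon
    set T : Finset E := Finset.image (algebraMap F E) Finset.univ with hT
    have hxT : x ∉ T := by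
      simp only [hT, Finset.mem_image, Finset.mem_univ, true_and]
      exact fun ⟨y, hy⟩ => hcon y hy
    have hTcard : T.card = q := by
      rw [hT, Finset.card_image_of_injective _ (algebraMap F E).injective, Finset.card_univ]
    set P : E[X] := X ^ q - X with hP
    have hPne : P ≠ 0 := FiniteField.X_pow_card_sub_X_ne_zero E hq2
    have hPdeg : P.natDegree = q := FiniteField.X_pow_card_sub_X_natDegree_eq E hq2
    have hroots : ∀ z ∈ insert x T, z ∈ P.roots := by
      intro z hz
      rw [mem_roots hPne]
      rcases Finset.mem_insert.mp hz with rfl | hz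
      · simp [hP, IsRoot, hx]
      · obtain ⟨y, -, rfl⟩ := Finset.mem_image.mp hz
        have hyq : y ^ q = y := FiniteField.pow_card y
        simp only [hP, IsRoot.def, eval_sub, eval_pow, eval_X, ← map_pow, hyq, sub_self]
    have hle : (insert x T).card ≤ P.roots.card := by
      have : (insert x T).val ≤ P.roots :=
        Finset.val_le_iff_val_subset.mpr (fun z hz => hroots z hz)
      exact Multiset.card_le_card this
    have := P.card_roots' 
    rw [hPdeg] at this
    rw [Finset.card_insert_of_notMem hxT, hTcard] at hle
    omega
  -- g descends to F, hence equals f.map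
  have fmap : f.map (algebraMap F E) = g := by
    have hlift : g ∈ lifts (algebraMap F E : F →+* E) := by
      rw [lifts_iff_coeff_lifts]
      intro m
      exact hfix _ (hgfix m)
    obtain ⟨h, hh⟩ := hlift
    have hh' : h.map (algebraMap F E) = g := hh
    have hgmonic : g.Monic := monic_prod_of_monic _ _ fun i _ => monic_X_sub_C _
    have hhmonic : h.Monic :=
      monic_of_injective (algebraMap F E).injective (hh' ▸ hgmonic)
    have hhdeg : h.natDegree = n := by
      have := natDegree_map_eq_of_injective (algebraMap F E).injective h
      rw [hh'] at this
      rw [← this, hgdef]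
      rw [natDegree_prod _ _ fun i _ => X_sub_C_ne_zero _,
        Finset.sum_congr rfl fun i _ => natDegree_X_sub_C (β ^ q ^ i)]
      simp
    have haevalh : aeval β h = 0 := by
      rw [aeval_def, eval₂_eq_eval_map, hh', hgdef, eval_prod]
      refine Finset.prod_eq_zero (Finset.mem_range.mpr hn) ?_
      simp
    have hdvd : f ∣ h := hmin ▸ minpoly.dvd F β haevalh
    have : h = f := by
      obtain ⟨c, rfl⟩ := hdvd
      have hc0 : c ≠ 0 := fun h0 => by simp [h0] at hhmonic
      have hf0 : f ≠ 0 := hmonic.ne_zero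
      have hcdeg : c.natDegree = 0 := by
        have := natDegree_mul hf0 hc0
        rw [hhdeg, hdeg] at this
        omega
      have hclead : c.leadingCoeff = 1 := by
        have := hhmonic
        rw [Monic, leadingCoeff_mul, hmonic.leadingCoeff, one_mul] at this
        exact this
      rw [Polynomial.eq_C_of_natDegree_eq_zero hcdeg] at hclead ⊢
      rw [leadingCoeff_C] at hclead
      rw [hclead, map_one, mul_one]
    rw [this] at hh'
    exact hh'
  -- the product of all k'-th roots of unity
  have hprodζ : ∏ i ∈ Finset.range k', ζ ^ i = (-1) ^ (k' + 1) := by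
    have h1 := X_pow_sub_C_eq_prod hζ hk'_pos (one_pow k')
    have h2 := congrArg (Polynomial.eval (0 : E)) h1
    simp only [eval_sub, eval_pow, eval_X, eval_C, eval_prod, zero_pow hk'_pos.ne', zero_sub,
      mul_one] at h2
    rw [Finset.prod_congr rfl (fun i _ => (neg_eq_neg_one_mul (ζ ^ i))),
      Finset.prod_mul_distrib, Finset.prod_const, Finset.card_range] at h2
    have h4 : ∏ i ∈ Finset.range k', ζ ^ i = (-1 : E) ^ k' * (-1 : E) := by
      have h3 := congrArg (fun t => (-1 : E) ^ k' * t) h2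
      rw [← mul_assoc, ← pow_add, Even.neg_one_pow ⟨k', rfl⟩, one_mul] at h3
      exact h3.symm
    rw [h4, ← pow_succ]
  -- the key per-root identity
  have key : ∀ α : E, ∏ j ∈ Finset.Icc 1 k, (C (ζ ^ j) * X - C α)
      = (-1 : E[X]) ^ (k + 1) * (X ^ k - C (α ^ k)) := by
    intro α
    set H : ℕ → E[X] := fun j => C (ζ ^ j) * X - C α with hHdef
    have hH0 : H 0 = X - C α := by
      show C (ζ ^ 0) * X - C α = X - C α
      rw [pow_zero, map_one, one_mul]
    have hH0ne : H 0 ≠ 0 := by rw [hH0]; exact X_sub_C_ne_zero α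
    have hHk : H k = H 0 := by
      show C (ζ ^ k) * X - C α = C (ζ ^ 0) * X - C α
      rw [hkk', pow_mul, hζk', one_pow, pow_zero]
    have hstep1 : ∏ j ∈ Finset.Icc 1 k, H j = ∏ i ∈ Finset.range k, H i := by
      rw [← Finset.Ico_add_one_right_eq_Icc, Finset.prod_Ico_eq_prod_range]
      rw [Finset.prod_congr rfl (fun i _ => by rw [add_comm 1 i])]
      exact prod_range_shift_aux hHk hH0ne
    have hper : ∀ i, H (i + k') = H i := by
      intro i
      show C (ζ ^ (i + k')) * X - C α = C (ζ ^ i) * X - C α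
      rw [pow_add, hζk', mul_one]
    have hstep2 : ∏ i ∈ Finset.range k, H i = (∏ i ∈ Finset.range k', H i) ^ d := by
      rw [hkk']
      exact prod_range_mul_periodic_aux hper d
    have hinner : ∏ i ∈ Finset.range k', H i
        = (-1 : E[X]) ^ (k' + 1) * (X ^ k' - C (α ^ k')) := by
      have hfac : ∀ i ∈ Finset.range k',
          H i = C (ζ ^ i) * (X - C (ζ ^ (k' - i) * α)) := by
        intro i hi
        rw [Finset.mem_range] at hi
        simp only [hHdef, mul_sub, ← C_mul, ← mul_assoc, ← pow_add]
        rw [Nat.add_sub_cancel' hi.le, hζk', one_mul]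
      rw [Finset.prod_congr rfl hfac, Finset.prod_mul_distrib]
      have hrefl : ∏ i ∈ Finset.range k', (X - C (ζ ^ (k' - i) * α))
          = X ^ k' - C (α ^ k') := by
        have e2 := Finset.prod_range_reflect (fun j => X - C (ζ ^ (j + 1) * α)) k'
        have e1 : ∀ i ∈ Finset.range k',
            (X - C (ζ ^ (k' - i) * α)) = X - C (ζ ^ (k' - 1 - i + 1) * α) := by
          intro i hi
          rw [Finset.mem_range] at hi
          rw [show k' - i = k' - 1 - i + 1 from by omega]
        rw [Finset.prod_congr rfl e1, e2]
        have hshift : ∏ j ∈ Finset.range k', (X - C (ζ ^ (j + 1) * α))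
            = ∏ j ∈ Finset.range k', (X - C (ζ ^ j * α)) := by
          refine prod_range_shift_aux (G := fun j => X - C (ζ ^ j * α)) ?_ ?_
          · show X - C (ζ ^ k' * α) = X - C (ζ ^ 0 * α)
            rw [hζk', pow_zero]
          · show X - C (ζ ^ 0 * α) ≠ 0
            exact X_sub_C_ne_zero _
        rw [hshift, ← X_pow_sub_C_eq_prod hζ hk'_pos rfl]
      rw [hrefl, ← map_prod, hprodζ]
      congr 1
      rw [map_pow, map_neg, map_one]
    -- put the power d on
    have hpow : (∏ i ∈ Finset.range k', H i) ^ d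
        = ((-1 : E[X]) ^ (k' + 1)) ^ d * (X ^ k - C (α ^ k)) := by
      rw [hinner, mul_pow]
      congr 1
      rw [hdu, sub_pow_char_pow, ← pow_mul, ← C_pow, ← pow_mul, ← hdu, ← hkk']
    -- fix the sign
    have hsign : ((-1 : E[X]) ^ (k' + 1)) ^ d = (-1 : E[X]) ^ (k + 1) := by
      rw [← pow_mul]
      by_cases hp2 : p = 2
      · have hchar2 : (-1 : E[X]) = 1 := by
          haveI : CharP E[X] 2 := by rw [← hp2]; infer_instance
          exact CharTwo.neg_eq 1
        rw [hchar2, one_pow, one_pow]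
      · have hpodd : Odd p := hp.odd_of_ne_two hp2
        have hdodd : Odd d := by rw [hdu]; exact hpodd.pow
        rcases Nat.even_or_odd k' with hke | hko
        · have h1 : Odd ((k' + 1) * d) := (Even.add_one hke).mul hdodd
          have h2 : Odd (k + 1) := by
            rw [hkk']; exact Even.add_one (hke.mul_right d)
          rw [h1.neg_one_pow, h2.neg_one_pow]
        · have h1 : Even ((k' + 1) * d) := (Odd.add_one hko).mul_right d
          have h2 : Even (k + 1) := by
            rw [hkk']; exact Odd.add_one (hko.mul hdodd)
          rw [h1.neg_one_pow, h2.neg_one_pow]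
    rw [hstep1, hstep2, hpow, hsign]
  -- now assemble everything
  rw [fmap, hgdef]
  have hLHS : (∏ i ∈ Finset.range n, (X - C ((β ^ k) ^ q ^ i))).comp (X ^ k)
      = ∏ i ∈ Finset.range n, (X ^ k - C ((β ^ q ^ i) ^ k)) := by
    rw [prod_comp]
    refine Finset.prod_congr rfl fun i _ => ?_
    rw [sub_comp, X_comp, C_comp, pow_right_comm]
  have hRHS : ∀ j : ℕ, (∏ i ∈ Finset.range n, (X - C (β ^ q ^ i))).comp (C (ζ ^ j) * X)
      = ∏ i ∈ Finset.range n, (C (ζ ^ j) * X - C (β ^ q ^ i)) := by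
    intro j
    rw [prod_comp]
    exact Finset.prod_congr rfl fun i _ => by rw [sub_comp, X_comp, C_comp]
  rw [hLHS, Finset.prod_congr rfl (fun j _ => hRHS j), Finset.prod_comm,
    Finset.prod_congr rfl (fun i _ => key (β ^ q ^ i)), Finset.prod_mul_distrib,
    Finset.prod_const, Finset.card_range, ← mul_assoc, ← pow_mul, ← pow_add]
  have : (-1 : E[X]) ^ (n * (k + 1) + (k + 1) * n) = 1 :=
    Even.neg_one_pow ⟨n * (k + 1), by ring⟩
  rw [this, one_mul]
end

section
/- Let β ∈ F_{q^n}, β ≠ 0, and let k be a positive integer with d := gcd(q,k) > 1; set k' = k/d. If the minimal polynomial of β^{k'} over Fq is m_{β^{k'}}(X) = Σ_{i=0}^{m} a_i X^i, then the minimal polynomial of β^k over Fq is m_{β^k}(X) = Σ_{i=0}^{m} a_i^{d} X^i; in particular, m_{β^k} and m_{β^{k'}} have the same degree and the same order. -/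
/-!
Since `d` divides `q`, it is a power of the characteristic, so `y ↦ y ^ d` is an iterated
Frobenius: an automorphism `φ` of `F_q` that extends to a ring endomorphism of `F_{q^n}`.
Applying `φ` to the coefficients of `m_{β^{k'}}` therefore gives a monic irreducible polynomial
vanishing at `(β ^ k') ^ d = β ^ k`. Mapping along a field homomorphism preserves the degree, and
it fixes `X ^ e - 1`, so it also preserves the order.
-/

open Polynomial

/-- The order of a polynomial over a finite field: the least positive integer `e`
such that `f ∣ X^e − 1`. -/
noncomputable def polyOrder {F : Type*} [Field F] (f : Polynomial F) : ℕ :=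
  sInf {e : ℕ | 0 < e ∧ f ∣ Polynomial.X ^ e - 1}

theorem minpoly_apply_eq_map {F E : Type*} [Field F] [Field E] [Algebra F E]
    (σ : F ≃+* F) (τ : E →+* E) (hτ : τ.comp (algebraMap F E) = (algebraMap F E).comp σ)
    {x : E} (hx : IsIntegral F x) :
    minpoly F (τ x) = (minpoly F x).map (σ : F →+* F) := by
  refine (minpoly.eq_of_irreducible_of_monic ?_ ?_ ((minpoly.monic hx).map _)).symm
  · exact (MulEquiv.irreducible_iff (mapEquiv σ).toMulEquiv).mpr (minpoly.irreducible hx)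
  · rw [aeval_def, eval₂_map, ← hτ, ← hom_eval₂, ← aeval_def, minpoly.aeval, map_zero]

theorem minpoly_pow_expChar_pow {F E : Type*} [Field F] [Field E] [Algebra F E]
    (p : ℕ) [ExpChar F p] [PerfectRing F p] (t : ℕ) (x : E) :
    minpoly F (x ^ p ^ t) = (minpoly F x).map (iterateFrobenius F p t) := by
  have := expChar_of_injective_algebraMap (algebraMap F E).injective p
  by_cases hx : IsIntegral F x
  · have hτ : (iterateFrobenius E p t).comp (algebraMap F E)
        = (algebraMap F E).comp (iterateFrobeniusEquiv F p t : F →+* F) := by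
      ext a
      simp [iterateFrobenius_def]
    exact minpoly_apply_eq_map _ _ hτ hx
  · have hxp : ¬IsIntegral F (x ^ p ^ t) := fun h ↦ hx (h.of_pow (expChar_pow_pos F p t))
    rw [minpoly.eq_zero hx, minpoly.eq_zero hxp, Polynomial.map_zero]

theorem polyOrder_map {F K : Type*} [Field F] [Field K] (σ : F →+* K) (f : F[X]) :
    polyOrder (f.map σ) = polyOrder f := by
  have hX (e : ℕ) : (X ^ e - 1 : K[X]) = (X ^ e - 1 : F[X]).map σ := by simp
  simp only [polyOrder, hX, map_dvd_map']

theorem exists_eq_ringExpChar_pow_of_dvd_card {F : Type*} [Field F] [Fintype F] {d : ℕ}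
    (hd : d ∣ Fintype.card F) : ∃ t, d = ringExpChar F ^ t := by
  obtain ⟨p, _, s, hp, hcard⟩ := FiniteField.card' F
  have := ExpChar.prime (R := F) hp
  rw [hcard] at hd
  obtain ⟨t, -, rfl⟩ := (Nat.dvd_prime_pow hp).mp hd
  exact ⟨t, by rw [ringExpChar.eq F p]⟩

theorem stmt5_general {F E : Type*} [Field F] [Fintype F] [Field E] [Algebra F E]
    (β : E)
    (k : ℕ)
    (d : ℕ) (hd : d = Nat.gcd (Fintype.card F) k)
    (k' : ℕ) (hk' : k' = k / d)
    (m : ℕ) (hm : m = (minpoly F (β ^ k')).natDegree) :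
    minpoly F (β ^ k)
        = ∑ i ∈ Finset.range (m + 1),
            Polynomial.C ((minpoly F (β ^ k')).coeff i ^ d) * X ^ i
      ∧ (minpoly F (β ^ k)).natDegree = (minpoly F (β ^ k')).natDegree
      ∧ polyOrder (minpoly F (β ^ k)) = polyOrder (minpoly F (β ^ k')) := by
  obtain ⟨t, hdt⟩ := exists_eq_ringExpChar_pow_of_dvd_card (hd ▸ Nat.gcd_dvd_left _ _)
  have hβk : β ^ k = (β ^ k') ^ d := by
    rw [← pow_mul, hk', Nat.div_mul_cancel (hd ▸ Nat.gcd_dvd_right _ _)]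
  have hmin :
      minpoly F (β ^ k) = (minpoly F (β ^ k')).map (iterateFrobenius F (ringExpChar F) t) := by
    rw [hβk, hdt, minpoly_pow_expChar_pow]
  refine ⟨?_, by rw [hmin, natDegree_map], by rw [hmin, polyOrder_map]⟩
  rw [hmin, as_sum_range_C_mul_X_pow (map _ _), natDegree_map, hm]
  simp only [coeff_map, iterateFrobenius_def, hdt]

/-- Let `β ∈ F_{q^n}`, `β ≠ 0`, and `k ≥ 1` with `d := gcd(q,k) > 1`;
set `k' = k / d`. If `m_{β^{k'}}(X) = ∑_{i=0}^m a_i X^i`, then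
`m_{β^k}(X) = ∑_{i=0}^m a_i^d X^i`; in particular `m_{β^k}` and `m_{β^{k'}}` have the same
degree and the same order. -/
theorem stmt5 {F E : Type*} [Field F] [Fintype F] [Field E] [Algebra F E]
    (n : ℕ) (hn : 0 < n) (hrank : Module.finrank F E = n)
    (β : E) (hβ0 : β ≠ 0)
    (k : ℕ) (hk : 0 < k)
    (d : ℕ) (hd : d = Nat.gcd (Fintype.card F) k) (hd1 : 1 < d)
    (k' : ℕ) (hk' : k' = k / d)
    (m : ℕ) (hm : m = (minpoly F (β ^ k')).natDegree) :
    minpoly F (β ^ k)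
        = ∑ i ∈ Finset.range (m + 1),
            Polynomial.C ((minpoly F (β ^ k')).coeff i ^ d) * X ^ i
      ∧ (minpoly F (β ^ k)).natDegree = (minpoly F (β ^ k')).natDegree
      ∧ polyOrder (minpoly F (β ^ k)) = polyOrder (minpoly F (β ^ k')) :=
  stmt5_general β k d hd k' hk' m hm
end

section
/- Let k be a positive integer with gcd(q,k) = 1, let β be a nonzero proper element of F_{q^n}, and let χ_{β^k} be the characteristic polynomial of β^k over Fq. Then for a positive integer t, one has χ_{β^k} = (m_{β^k})^t if and only if every monic irreducible factor of χ_{β^k}(X^k) over Fq appears in its factorization with multiplicity exactly t. -/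
open Polynomial IntermediateField

section AuxStmt7

variable {F E : Type*} [Field F] [Fintype F] [Field E] [Algebra F E]

variable {F E : Type*} [Field F] [Fintype F] [Field E] [Algebra F E]

lemma aux_fixed (c : E) (hc : c ^ Fintype.card F = c) : c ∈ Set.range (algebraMap F E) := by
  classical
  set q := Fintype.card F with hq
  set P : E[X] := X ^ q - X with hP
  have hq1 : 1 < q := Fintype.one_lt_card
  have hPne : P ≠ 0 := FiniteField.X_pow_card_sub_X_ne_zero E hq1
  have hPdeg : P.natDegree = q := FiniteField.X_pow_card_sub_X_natDegree_eq E hq1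
  set S : Finset E := Finset.univ.image (algebraMap F E) with hS
  by_contra hcn
  have hcS : c ∉ S := by
    intro h
    obtain ⟨a, _, ha⟩ := Finset.mem_image.mp h
    exact hcn ⟨a, ha⟩
  have hsub : insert c S ⊆ P.roots.toFinset := by
    intro x hx
    rw [Multiset.mem_toFinset, mem_roots hPne]
    rcases Finset.mem_insert.mp hx with rfl | hx
    · simp [hP, IsRoot, hc]
    · obtain ⟨a, _, rfl⟩ := Finset.mem_image.mp hx
      simp only [hP, IsRoot, eval_sub, eval_pow, eval_X, ← map_pow]
      rw [hq, FiniteField.pow_card, sub_self]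
  have h1 : (insert c S).card = q + 1 := by
    rw [Finset.card_insert_of_notMem hcS,
      Finset.card_image_of_injective _ (algebraMap F E).injective, Finset.card_univ]
  have h2 : P.roots.toFinset.card ≤ q :=
    le_trans (Multiset.toFinset_card_le _) (le_trans P.card_roots' (le_of_eq hPdeg))
  have := Finset.card_le_card hsub
  omega

lemma aux_pow_q_pow [FiniteDimensional F E] (γ : E) :
    γ ^ Fintype.card F ^ (minpoly F γ).natDegree = γ := by
  have hint : IsIntegral F γ := .of_finite F γ
  haveI : Finite E := Module.finite_of_finite F
  haveI : Fintype F⟮γ⟯ := Fintype.ofFinite _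
  have hfin : Module.finrank F F⟮γ⟯ = (minpoly F γ).natDegree :=
    IntermediateField.adjoin.finrank hint
  have hcard : Fintype.card F⟮γ⟯ = Fintype.card F ^ (minpoly F γ).natDegree := by
    rw [Module.card_eq_pow_finrank (K := F) (V := F⟮γ⟯), hfin]
  have hgen := FiniteField.pow_card (IntermediateField.AdjoinSimple.gen F γ)
  rw [hcard] at hgen
  have h2 := congrArg (algebraMap F⟮γ⟯ E) hgen
  simpa [map_pow] using h2

lemma aux_minpoly_map [FiniteDimensional F E] (γ : E) :
    (minpoly F γ).map (algebraMap F E)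
      = ∏ i ∈ Finset.range (minpoly F γ).natDegree,
          (X - C (γ ^ Fintype.card F ^ i)) := by
  classical
  set q := Fintype.card F with hq
  set d := (minpoly F γ).natDegree with hd
  have hint : IsIntegral F γ := .of_finite F γ
  have hdpos : 0 < d := minpoly.natDegree_pos hint
  have hγd : γ ^ q ^ d = γ := aux_pow_q_pow γ
  set h : ℕ → E[X] := fun i => X - C (γ ^ q ^ i) with hh
  set P : E[X] := ∏ i ∈ Finset.range d, h i with hPdef
  have hper : h d = h 0 := by simp only [hh, hγd, pow_zero, pow_one]
  -- frobenius-type map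
  obtain ⟨p, hpc⟩ : ∃ p, CharP F p := CharP.exists F
  haveI := hpc
  haveI hp : Fact p.Prime := ⟨CharP.char_is_prime F p⟩
  obtain ⟨m, _, hqpm⟩ := FiniteField.card F p
  haveI : CharP E p := charP_of_injective_algebraMap (algebraMap F E).injective p
  haveI : ExpChar E p := .prime hp.out
  set ψ := iterateFrobenius E p (m : ℕ) with hψ
  have hψx : ∀ x : E, ψ x = x ^ q := fun x => by
    rw [hψ, iterateFrobenius_def, hq, hqpm]
  have hmap : P.map ψ = P := by
    have h1 : P.map ψ = ∏ i ∈ Finset.range d, h (i + 1) := by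
      rw [hPdef, Polynomial.map_prod]
      refine Finset.prod_congr rfl fun i _ => ?_
      rw [hh]
      simp only [Polynomial.map_sub, Polynomial.map_X, Polynomial.map_C, hψx]
      rw [← pow_mul, ← pow_succ]
    rw [h1]
    have e1 : (∏ i ∈ Finset.range d, h (i + 1)) * h 0
        = (∏ i ∈ Finset.range d, h i) * h d := by
      rw [← Finset.prod_range_succ' h d, Finset.prod_range_succ]
    rw [hper] at e1
    exact mul_right_cancel₀ (X_sub_C_ne_zero _) e1
  have hcoeff : ∀ j, P.coeff j ∈ Set.range (algebraMap F E) := by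
    intro j
    apply aux_fixed
    have := congrArg (fun r : E[X] => r.coeff j) hmap
    simpa [coeff_map, hψx] using this
  have hPmonic : P.Monic := monic_prod_of_monic _ _ fun i _ => monic_X_sub_C _
  have hPlifts : P ∈ Polynomial.lifts (algebraMap F E) :=
    (lifts_iff_coeff_lifts P).mpr hcoeff
  obtain ⟨g, hgmap, hgdeg, hgmonic⟩ := lifts_and_degree_eq_and_monic hPlifts hPmonic
  have hPdeg : P.natDegree = d := by
    rw [hPdef, natDegree_prod _ _ fun i _ => X_sub_C_ne_zero _]
    have h1 : ∀ i ∈ Finset.range d, (h i).natDegree = 1 := fun i _ => by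
      simp only [hh]; exact natDegree_X_sub_C _
    rw [Finset.sum_congr rfl h1]
    simp
  have hgnd : g.natDegree = d := by
    rw [natDegree, hgdeg, ← natDegree, hPdeg]
  have hroot : Polynomial.aeval γ g = 0 := by
    have hev : P.eval γ = 0 := by
      rw [hPdef, eval_prod]
      refine Finset.prod_eq_zero (Finset.mem_range.mpr hdpos) ?_
      simp [hh, natDegree_X_sub_C]
    rw [aeval_def, ← eval_map, hgmap, hev]
  have hdvd : minpoly F γ ∣ g := minpoly.dvd F γ hroot
  have hmg : minpoly F γ = g := by
    obtain ⟨c, hc⟩ := hdvd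
    have hg0 : g ≠ 0 := hgmonic.ne_zero
    have hm0 : minpoly F γ ≠ 0 := minpoly.ne_zero hint
    have hc0 : c ≠ 0 := by rintro rfl; simp at hc; exact hg0 hc
    have hcd : c.natDegree = 0 := by
      have := hgnd
      rw [hc, natDegree_mul hm0 hc0, ← hd] at this
      omega
    have hclc : c.leadingCoeff = 1 := by
      have := hgmonic
      rw [hc] at this
      have h2 := this.leadingCoeff
      rwa [leadingCoeff_mul, (minpoly.monic hint).leadingCoeff, one_mul] at h2
    have : c = 1 := by
      rw [eq_C_of_natDegree_eq_zero hcd]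
      rw [Polynomial.leadingCoeff, hcd] at hclc
      rw [hclc, map_one]
    rw [hc, this, mul_one]
  rw [hmg, hgmap]

end AuxStmt7

lemma aux_shift {M : Type*} (h : ℕ → M) (d : ℕ) (hper : ∀ i, h (i + d) = h i) :
    ∀ (a i : ℕ), h (i + d * a) = h i := by
  intro a
  induction a with
  | zero => simp
  | succ a ih =>
    intro i
    have e : i + d * (a + 1) = i + d * a + d := by ring
    rw [e, hper, ih]

lemma aux_prod_pow {M : Type*} [CommMonoid M] (h : ℕ → M) (d : ℕ)
    (hper : ∀ i, h (i + d) = h i) (s : ℕ) :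
    ∏ i ∈ Finset.range (d * s), h i = (∏ i ∈ Finset.range d, h i) ^ s := by
  induction s with
  | zero => simp
  | succ s ih =>
    rw [Nat.mul_succ, Finset.prod_range_add, ih, pow_succ]
    congr 1
    refine Finset.prod_congr rfl fun i _ => ?_
    rw [add_comm (d * s) i, aux_shift h d hper s i]

lemma aux_mult {F : Type*} [Field F] {g p : F[X]} (hsq : Squarefree g)
    (hp : Prime p) (hdvd : p ∣ g) (s : ℕ) :
    p ^ s ∣ g ^ s ∧ ¬ p ^ (s + 1) ∣ g ^ s := by
  obtain ⟨h, rfl⟩ := hdvd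
  have hph : ¬ p ∣ h := by
    intro hd
    obtain ⟨h', rfl⟩ := hd
    exact hp.not_unit (hsq p ⟨h', by ring⟩)
  refine ⟨pow_dvd_pow_of_dvd (Dvd.intro h rfl) s, fun hdd => ?_⟩
  have hps : p ^ s * p ∣ p ^ s * h ^ s := by
    rw [← pow_succ]
    simpa [mul_pow] using hdd
  have hph' : p ∣ h ^ s :=
    (mul_dvd_mul_iff_left (pow_ne_zero s hp.ne_zero)).mp hps
  exact hph (hp.dvd_of_dvd_pow hph')

/-- Let `k ≥ 1` with `gcd(q,k) = 1`, `β` a nonzero proper element of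
`F_{q^n}`, and `χ_{β^k}(X) = ∏_{i=0}^{n-1} (X − (β^k)^{q^i}) ∈ F_q[X]` the characteristic
polynomial of `β^k` over `F_q`. Then, for a positive integer `t`,
`χ_{β^k} = (m_{β^k})^t` iff every monic irreducible factor of `χ_{β^k}(X^k)` over `F_q`
appears in its factorization with multiplicity exactly `t`. -/
theorem stmt7 {F E : Type*} [Field F] [Fintype F] [Field E] [Algebra F E]
    (n : ℕ) (hn : 0 < n) (hrank : Module.finrank F E = n)
    (β : E) (hβ0 : β ≠ 0) (hproper : (minpoly F β).natDegree = n)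
    (k : ℕ) (hk : 0 < k) (hgcd : Nat.gcd (Fintype.card F) k = 1)
    (χ : F[X])
    (hχ : χ.map (algebraMap F E)
      = ∏ i ∈ Finset.range n, (X - C ((β ^ k) ^ Fintype.card F ^ i)))
    (t : ℕ) (ht : 0 < t) :
    χ = (minpoly F (β ^ k)) ^ t ↔
      ∀ p : F[X], p.Monic → Irreducible p → p ∣ χ.comp (X ^ k) →
        p ^ t ∣ χ.comp (X ^ k) ∧ ¬ p ^ (t + 1) ∣ χ.comp (X ^ k) := by
  haveI : FiniteDimensional F E := .of_finrank_pos (hrank ▸ hn)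
  set q := Fintype.card F with hq
  set γ := β ^ k with hγ
  set m := minpoly F γ with hm
  set d := m.natDegree with hdd
  have hint : IsIntegral F γ := .of_finite F γ
  have hdpos : 0 < d := minpoly.natDegree_pos hint
  have hddvd : d ∣ n := hrank ▸ minpoly.degree_dvd hint
  set s := n / d with hs
  have hn_eq : d * s = n := Nat.mul_div_cancel' hddvd
  have hspos : 0 < s := Nat.div_pos (Nat.le_of_dvd hn hddvd) hdpos
  have hγd : γ ^ q ^ d = γ := aux_pow_q_pow γ
  have hper : ∀ i, (fun i => (X : E[X]) - C (γ ^ q ^ i)) (i + d)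
      = (fun i => (X : E[X]) - C (γ ^ q ^ i)) i := by
    intro i
    simp only
    rw [add_comm i d, pow_add, pow_mul, hγd]
  -- χ = m ^ s
  have hχ_eq : χ = m ^ s := by
    apply Polynomial.map_injective (algebraMap F E) (algebraMap F E).injective
    rw [hχ, Polynomial.map_pow, aux_minpoly_map γ, ← hm, ← hdd, ← hq,
      ← aux_prod_pow _ d hper s, hn_eq]
  -- the composed polynomial
  set g := m.comp (X ^ k) with hg
  have hcomp : χ.comp (X ^ k) = g ^ s := by rw [hχ_eq, pow_comp]
  have hγ0 : γ ≠ 0 := pow_ne_zero k hβ0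
  have hm00 : m.coeff 0 ≠ 0 := minpoly.coeff_zero_ne_zero hint hγ0
  have hg00 : g.coeff 0 ≠ 0 := by
    rw [coeff_zero_eq_eval_zero, hg, eval_comp, eval_pow, eval_X,
      zero_pow hk.ne', ← coeff_zero_eq_eval_zero]
    exact hm00
  -- k ≠ 0 in F
  have hkF : (k : F) ≠ 0 := by
    intro hkF
    obtain ⟨p, hpc⟩ : ∃ p, CharP F p := CharP.exists F
    haveI := hpc
    have hp : p.Prime := CharP.char_is_prime F p
    have h1 : p ∣ q := (CharP.cast_eq_zero_iff F p q).mp (by rw [hq]; exact FiniteField.cast_card_eq_zero F)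
    have h2 : p ∣ k := (CharP.cast_eq_zero_iff F p k).mp hkF
    have : p ∣ 1 := hgcd ▸ Nat.dvd_gcd h1 h2
    exact Nat.not_prime_one (Nat.dvd_one.mp this ▸ hp)
  -- separability / squarefreeness of g
  have hmsep : m.Separable := PerfectField.separable_of_irreducible (minpoly.irreducible hint)
  have hcop : IsCoprime g (m.derivative.comp (X ^ k)) := by
    have := IsCoprime.map hmsep (Polynomial.eval₂RingHom (C : F →+* F[X]) (X ^ k))
    simpa [Polynomial.comp, hg] using this
  have hgX : IsCoprime g (X : F[X]) := by
    refine (Polynomial.irreducible_X.coprime_iff_not_dvd.mpr ?_).symm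
    rw [X_dvd_iff]
    exact hg00
  have hgsep : g.Separable := by
    rw [Polynomial.Separable, hg, derivative_comp, derivative_X_pow]
    refine IsCoprime.mul_right (IsCoprime.mul_right ?_ hgX.pow_right) hcop
    exact ⟨0, C (k : F)⁻¹, by
      rw [zero_mul, zero_add, ← C_mul, inv_mul_cancel₀ hkF, C_1]⟩
  have hsq : Squarefree g := hgsep.squarefree
  constructor
  · intro heq p pmon pirr pdvd
    have hts : t = s := by
      have hdeg := congrArg Polynomial.natDegree (heq.symm.trans hχ_eq)
      rw [natDegree_pow, natDegree_pow] at hdeg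
      exact Nat.eq_of_mul_eq_mul_right hdpos hdeg
    have hpg : p ∣ g := pirr.prime.dvd_of_dvd_pow (hcomp ▸ pdvd)
    obtain ⟨h1, h2⟩ := aux_mult hsq pirr.prime hpg s
    rw [hts, hcomp]
    exact ⟨h1, h2⟩
  · intro H
    have hgdeg : g.natDegree = d * k := by
      rw [hg, natDegree_comp, natDegree_X_pow, ← hdd]
    have hgnu : ¬ IsUnit g := by
      apply Polynomial.not_isUnit_of_natDegree_pos
      rw [hgdeg]
      positivity
    obtain ⟨p, pmon, pirr, pdvd⟩ := g.exists_monic_irreducible_factor hgnu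
    obtain ⟨ht1, ht2⟩ := H p pmon pirr
      (by rw [hcomp]; exact pdvd.trans (dvd_pow_self g hspos.ne'))
    rw [hcomp] at ht1 ht2
    obtain ⟨hs1, hs2⟩ := aux_mult hsq pirr.prime pdvd s
    have hts : t = s := by
      by_contra hne
      rcases Nat.lt_or_ge t s with hlt | hge
      · exact ht2 ((pow_dvd_pow p (by omega)).trans hs1)
      · exact hs2 ((pow_dvd_pow p (by omega)).trans ht1)
    rw [hχ_eq, hts]
end

section
/- Let k be a positive integer with gcd(k,q) = 1, let ζ_k be a primitive k-th root of unity in an extension field of Fq, and let f ∈ Fq[X] be a polynomial of degree n with f(0) ≠ 0. Set t = max{ m : m divides gcd(n,k) and f(X) = g(X^m) for some g ∈ Fq[X] }. Then for 0 ≤ j, j' ≤ k−1, the two polynomials ζ_k^{−jn} f(ζ_k^{j} X) and ζ_k^{−j'n} f(ζ_k^{j'} X) are equal if and only if j ≡ j' (mod k/t). -/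
open Polynomial

lemma coeff_comp_C_mul_X' {R : Type*} [CommSemiring R] (P : R[X]) (u : R) (i : ℕ) :
    (P.comp (C u * X)).coeff i = P.coeff i * u ^ i := by
  rw [comp, eval₂_eq_sum, Polynomial.sum, finset_sum_coeff]
  simp only [mul_pow, ← C_pow, ← mul_assoc, ← C_mul, coeff_C_mul, coeff_X_pow, mul_ite, mul_one,
    mul_zero]
  rw [Finset.sum_ite_eq P.support i (fun e => P.coeff e * u ^ e)]
  split_ifs with h
  · rfl
  · simp [Polynomial.notMem_support_iff.mp h]

lemma expand_contract_of_dvd {R : Type*} [CommSemiring R] (m : ℕ) (hm : m ≠ 0) (f : R[X])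
    (hf : ∀ i, f.coeff i ≠ 0 → m ∣ i) : (Polynomial.expand R m (f.contract m)) = f := by
  ext i
  rw [coeff_expand hm.bot_lt]
  split_ifs with h
  · rw [coeff_contract hm, Nat.div_mul_cancel h]
  · symm
    by_contra hne
    exact h (hf i hne)

lemma nat_key (k a n : ℕ) (hk : 0 < k) (S : Finset ℕ) :
    (∀ i ∈ S, k ∣ a * (n - i)) ↔ k / Nat.gcd k (S.gcd (fun i => n - i)) ∣ a := by
  set G := S.gcd (fun i => n - i) with hG
  set t := Nat.gcd k G with htdef
  have htpos : 0 < t := Nat.gcd_pos_of_pos_left _ hk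
  have htk : t ∣ k := Nat.gcd_dvd_left ..
  have htG : t ∣ G := Nat.gcd_dvd_right ..
  constructor
  · intro h
    have hkG : k ∣ a * G := by
      have h2 : k ∣ S.gcd (fun i => a * (n - i)) := Finset.dvd_gcd h
      rwa [Finset.gcd_mul_left, normalize_eq, ← hG] at h2
    have hco : Nat.Coprime (k / t) (G / t) := Nat.coprime_div_gcd_div_gcd htpos
    have hdd : k / t ∣ a * (G / t) := by
      apply Nat.dvd_of_mul_dvd_mul_right htpos
      rw [mul_assoc, Nat.div_mul_cancel htG, Nat.div_mul_cancel htk]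
      exact hkG
    exact hco.dvd_of_dvd_mul_right hdd
  · intro h i hi
    have h1 : t ∣ n - i := htG.trans (Finset.gcd_dvd hi)
    have : (k / t) * t ∣ a * (n - i) := mul_dvd_mul h h1
    rwa [Nat.div_mul_cancel htk] at this

lemma greatest_lemma {F : Type*} [Field F] (k : ℕ) (hk : 0 < k) (f : F[X]) (hf0 : f.coeff 0 ≠ 0) :
    IsGreatest {m : ℕ | m ∣ Nat.gcd f.natDegree k ∧ ∃ g : F[X], f = g.comp (X ^ m)}
      (Nat.gcd k (f.support.gcd fun i => f.natDegree - i)) := by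
  set n := f.natDegree with hn
  set S := f.support with hS
  set e := Nat.gcd k (S.gcd fun i => n - i) with he
  have hfne : f ≠ 0 := fun h => hf0 (by simp [h])
  have h0S : 0 ∈ S := mem_support_iff.mpr hf0
  have hnS : n ∈ S := mem_support_iff.mpr (by
    rw [hn]; exact mt leadingCoeff_eq_zero.mp hfne)
  have hle : ∀ i ∈ S, i ≤ n := fun i hi => le_natDegree_of_ne_zero (mem_support_iff.mp hi)
  have hepos : 0 < e := Nat.gcd_pos_of_pos_left _ hk
  have heG : e ∣ S.gcd fun i => n - i := Nat.gcd_dvd_right ..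
  have hen : e ∣ n := by
    have := heG.trans (Finset.gcd_dvd h0S)
    simpa using this
  have mem_iff : ∀ m : ℕ, (m ∣ Nat.gcd n k ∧ ∃ g : F[X], f = g.comp (X ^ m)) ↔ m ∣ e := by
    intro m
    constructor
    · rintro ⟨hm1, g, hg⟩
      have hm0 : m ≠ 0 := by
        rintro rfl
        have h := (Nat.gcd_eq_zero_iff.mp (Nat.eq_zero_of_zero_dvd hm1)).2
        omega
      have hmi : ∀ i ∈ S, m ∣ i := by
        intro i hi
        have hc := mem_support_iff.mp hi
        rw [hg, ← expand_eq_comp_X_pow, coeff_expand hm0.bot_lt] at hc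
        by_contra hmd
        simp [hmd] at hc
      refine Nat.dvd_gcd ((Nat.dvd_gcd_iff.mp hm1).2) (Finset.dvd_gcd fun i hi => ?_)
      exact Nat.dvd_sub (Nat.dvd_gcd_iff.mp hm1).1 (hmi i hi)
    · intro hme
      have hm0 : m ≠ 0 := fun h => by subst h; exact hepos.ne' (Nat.eq_zero_of_zero_dvd hme)
      have hmn : m ∣ n := hme.trans hen
      have hmk : m ∣ k := hme.trans (Nat.gcd_dvd_left ..)
      have hmi : ∀ i, f.coeff i ≠ 0 → m ∣ i := by
        intro i hc
        have hi : i ∈ S := mem_support_iff.mpr hc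
        have h1 : m ∣ n - i := (hme.trans heG).trans (Finset.gcd_dvd hi)
        have h2 : m ∣ n - (n - i) := Nat.dvd_sub hmn h1
        rwa [Nat.sub_sub_self (hle i hi)] at h2
      refine ⟨Nat.dvd_gcd hmn hmk, f.contract m, ?_⟩
      rw [← expand_eq_comp_X_pow, expand_contract_of_dvd m hm0 f hmi]
  constructor
  · exact (mem_iff e).mpr dvd_rfl
  · intro m hm
    exact Nat.le_of_dvd hepos ((mem_iff m).mp hm)

/-- Let `k ≥ 1` with `gcd(k,q) = 1`, `ζ_k` a primitive `k`-th root of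
unity in an extension field of `F_q`, and `f ∈ F_q[X]` of degree `n` with `f(0) ≠ 0`. Set
`t = max{ m : m ∣ gcd(n,k), f(X) = g(X^m) for some g ∈ F_q[X] }`. Then for
`0 ≤ j, j' ≤ k−1` the polynomials `ζ_k^{−jn} f(ζ_k^j X)` and `ζ_k^{−j'n} f(ζ_k^{j'} X)`
are equal iff `j ≡ j' (mod k/t)`. -/
theorem stmt10 {F E : Type*} [Field F] [Fintype F] [Field E] [Algebra F E]
    (k : ℕ) (hk : 0 < k) (hgcd : Nat.gcd k (Fintype.card F) = 1)
    (ζ : E) (hζ : IsPrimitiveRoot ζ k)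
    (f : F[X]) (n : ℕ) (hdeg : f.natDegree = n) (hf0 : f.coeff 0 ≠ 0)
    (t : ℕ)
    (ht : IsGreatest {m : ℕ | m ∣ Nat.gcd n k ∧ ∃ g : F[X], f = g.comp (X ^ m)} t)
    (j j' : ℕ) (hj : j ≤ k - 1) (hj' : j' ≤ k - 1) :
    C ((ζ ^ (j * n))⁻¹) * (f.map (algebraMap F E)).comp (C (ζ ^ j) * X)
        = C ((ζ ^ (j' * n))⁻¹) * (f.map (algebraMap F E)).comp (C (ζ ^ j') * X)
      ↔ j ≡ j' [MOD k / t] := by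
  subst hdeg
  set n := f.natDegree with hn
  set S := f.support with hS
  set e := Nat.gcd k (S.gcd fun i => n - i) with he
  have hte : t = e := ht.unique (greatest_lemma k hk f hf0)
  subst hte
  have hζ0 : ζ ≠ 0 := hζ.ne_zero hk.ne'
  have hord : orderOf ζ = k := hζ.eq_orderOf.symm
  have hle : ∀ i ∈ S, i ≤ n := fun i hi => le_natDegree_of_ne_zero (mem_support_iff.mp hi)
  set φ := algebraMap F E with hφ
  set a := ((j : ℤ) - (j' : ℤ)).natAbs with ha
  -- Step 1: polynomial equality iff coefficientwise condition on the support
  have step1 : (C ((ζ ^ (j * n))⁻¹) * (f.map φ).comp (C (ζ ^ j) * X)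
        = C ((ζ ^ (j' * n))⁻¹) * (f.map φ).comp (C (ζ ^ j') * X))
      ↔ ∀ i ∈ S, ζ ^ (j * i + j' * n) = ζ ^ (j' * i + j * n) := by
    rw [Polynomial.ext_iff]
    have percoeff : ∀ (c : ℕ) (u : E) i,
        (C ((ζ ^ c)⁻¹) * (f.map φ).comp (C u * X)).coeff i
          = (ζ ^ c)⁻¹ * (φ (f.coeff i) * u ^ i) := by
      intro c u i
      rw [coeff_C_mul, coeff_comp_C_mul_X', coeff_map]
    have per : ∀ i : ℕ,
        ((C ((ζ ^ (j * n))⁻¹) * (f.map φ).comp (C (ζ ^ j) * X)).coeff i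
          = (C ((ζ ^ (j' * n))⁻¹) * (f.map φ).comp (C (ζ ^ j') * X)).coeff i)
        ↔ (f.coeff i = 0 ∨ ζ ^ (j * i + j' * n) = ζ ^ (j' * i + j * n)) := by
      intro i
      rw [percoeff, percoeff, ← pow_mul, ← pow_mul]
      rcases eq_or_ne (f.coeff i) 0 with hc | hc
      · simp [hc]
      · have hc' : φ (f.coeff i) ≠ 0 :=
          fun h => hc ((algebraMap F E).injective (by rw [h, map_zero]))
        rw [inv_mul_eq_div, inv_mul_eq_div,
          div_eq_div_iff (pow_ne_zero _ hζ0) (pow_ne_zero _ hζ0),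
          mul_assoc, mul_assoc, mul_right_inj' hc', ← pow_add, ← pow_add]
        simp [hc]
    constructor
    · intro h i hi
      exact ((per i).mp (h i)).resolve_left (mem_support_iff.mp hi)
    · intro h i
      refine (per i).mpr ?_
      rcases eq_or_ne (f.coeff i) 0 with hc | hc
      · exact Or.inl hc
      · exact Or.inr (h i (mem_support_iff.mpr hc))
  rw [step1]
  -- Step 2: rewrite each condition as a divisibility in ℕ
  have step2 : ∀ i ∈ S, (ζ ^ (j * i + j' * n) = ζ ^ (j' * i + j * n) ↔ k ∣ a * (n - i)) := by
    intro i hi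
    obtain ⟨u, hu⟩ := hζ.isUnit hk.ne'
    have hou : orderOf u = k := by rw [← hord, ← hu, orderOf_units]
    rw [← hu, ← Units.val_pow_eq_pow_val, ← Units.val_pow_eq_pow_val, Units.val_inj,
      pow_eq_pow_iff_modEq, hou, Nat.modEq_iff_dvd]
    have hcast : ((j' * i + j * n : ℕ) : ℤ) - ((j * i + j' * n : ℕ) : ℤ)
        = ((j : ℤ) - j') * ((n : ℤ) - i) := by push_cast; ring
    rw [hcast, ← Int.natAbs_dvd_natAbs, Int.natAbs_mul, ← ha]
    have : ((n : ℤ) - i) = ((n - i : ℕ) : ℤ) := by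
      have := hle i hi
      push_cast [this]
      ring
    rw [this, Int.natAbs_natCast, Int.natAbs_natCast]
  have step3 : (∀ i ∈ S, ζ ^ (j * i + j' * n) = ζ ^ (j' * i + j * n))
      ↔ ∀ i ∈ S, k ∣ a * (n - i) :=
    forall₂_congr step2
  rw [step3, nat_key k a n hk S, ← he]
  -- Step 4: k/e ∣ a ↔ j ≡ j' [MOD k/e]
  rw [Nat.modEq_iff_dvd]
  have habs : ((j' : ℤ) - j).natAbs = a := by omega
  rw [← Int.natAbs_dvd_natAbs, habs, Int.natAbs_natCast]
end

section
/- Let f ∈ Fq[X] be a polynomial with f(0) ≠ 0, let d be a positive integer with gcd(d,q) = 1, and let M = { m : m divides d and f(X) = g(X^m) for some g ∈ Fq[X] }. Let t = max M. Then M is exactly the set of all positive divisors of t. -/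
/-!
`f` is a polynomial in `X ^ m` exactly when `m` divides every exponent in the support of `f`,
so such `m` are closed under `lcm` and under taking divisors. Maximality of `t` then forces
`lcm m t = t`, i.e. `m ∣ t`.
-/

open Polynomial

namespace Polynomial

variable {R : Type*} [CommSemiring R]

theorem exists_eq_comp_X_pow_iff (f : R[X]) {m : ℕ} (hm : m ≠ 0) :
    (∃ g : R[X], f = g.comp (X ^ m)) ↔ ∀ n, f.coeff n ≠ 0 → m ∣ n := by
  simp_rw [← expand_eq_comp_X_pow]
  constructor
  · rintro ⟨g, rfl⟩ n hn
    rw [coeff_expand hm.bot_lt] at hn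
    exact of_not_not fun hdvd ↦ hn (if_neg hdvd)
  · intro h
    refine ⟨contract m f, ?_⟩
    ext n
    rw [coeff_expand hm.bot_lt, coeff_contract hm]
    split_ifs with hdvd
    · rw [Nat.div_mul_cancel hdvd]
    · exact not_not.mp (mt (h n) hdvd)

theorem exists_eq_comp_X_pow_of_dvd {f : R[X]} {k m : ℕ} (hkm : k ∣ m)
    (hm : ∃ g : R[X], f = g.comp (X ^ m)) : ∃ g : R[X], f = g.comp (X ^ k) := by
  obtain ⟨g, rfl⟩ := hm
  obtain ⟨j, rfl⟩ := hkm
  exact ⟨g.comp (X ^ j), by rw [comp_assoc, X_pow_comp, ← pow_mul, mul_comm]⟩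

theorem exists_eq_comp_X_pow_lcm {f : R[X]} {k m : ℕ} (hk : k ≠ 0) (hm : m ≠ 0)
    (hfk : ∃ g : R[X], f = g.comp (X ^ k)) (hfm : ∃ g : R[X], f = g.comp (X ^ m)) :
    ∃ g : R[X], f = g.comp (X ^ Nat.lcm k m) := by
  rw [exists_eq_comp_X_pow_iff f hk] at hfk
  rw [exists_eq_comp_X_pow_iff f hm] at hfm
  rw [exists_eq_comp_X_pow_iff f (Nat.lcm_ne_zero hk hm)]
  exact fun n hn ↦ Nat.lcm_dvd (hfk n hn) (hfm n hn)

end Polynomial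

theorem stmt11_general {F : Type*} [Field F]
    (f : F[X])
    (d : ℕ) (hd : 0 < d)
    (t : ℕ)
    (ht : IsGreatest {m : ℕ | m ∣ d ∧ ∃ g : F[X], f = g.comp (X ^ m)} t) :
    {m : ℕ | m ∣ d ∧ ∃ g : F[X], f = g.comp (X ^ m)} = {m : ℕ | 0 < m ∧ m ∣ t} := by
  obtain ⟨⟨htd, hft⟩, htmax⟩ := ht
  have ht0 : t ≠ 0 := (Nat.pos_of_dvd_of_pos htd hd).ne'
  ext m
  constructor
  · rintro ⟨hmd, hfm⟩
    have hm0 : m ≠ 0 := (Nat.pos_of_dvd_of_pos hmd hd).ne'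
    have hlcm_le : Nat.lcm m t ≤ t :=
      htmax ⟨Nat.lcm_dvd hmd htd, exists_eq_comp_X_pow_lcm hm0 ht0 hfm hft⟩
    have hlcm : Nat.lcm m t = t :=
      hlcm_le.antisymm (Nat.le_of_dvd (Nat.pos_of_ne_zero (Nat.lcm_ne_zero hm0 ht0))
        (Nat.dvd_lcm_right m t))
    exact ⟨Nat.pos_of_ne_zero hm0, Nat.lcm_eq_right_iff_dvd.mp hlcm⟩
  · rintro ⟨-, hmt⟩
    exact ⟨hmt.trans htd, exists_eq_comp_X_pow_of_dvd hmt hft⟩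

/-- Let `f ∈ F_q[X]` with `f(0) ≠ 0`, `d ≥ 1` with `gcd(d,q) = 1`, and
`M = { m : m ∣ d, f(X) = g(X^m) for some g ∈ F_q[X] }`. Let `t = max M`. Then `M` is exactly
the set of all positive divisors of `t`. -/
theorem stmt11 {F : Type*} [Field F] [Fintype F]
    (f : F[X]) (hf0 : f.coeff 0 ≠ 0)
    (d : ℕ) (hd : 0 < d) (hgcd : Nat.gcd d (Fintype.card F) = 1)
    (t : ℕ)
    (ht : IsGreatest {m : ℕ | m ∣ d ∧ ∃ g : F[X], f = g.comp (X ^ m)} t) :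
    {m : ℕ | m ∣ d ∧ ∃ g : F[X], f = g.comp (X ^ m)} = {m : ℕ | 0 < m ∧ m ∣ t} :=
  stmt11_general f d hd t ht
end

section
/- Let k be a positive integer dividing q − 1, let ζ_k ∈ Fq be a primitive k-th root of unity, let f ∈ Fq[X], f ≠ X, be a monic irreducible polynomial of degree n, and let β ∈ F_{q^n} be a root of f. Set t = max{ m : m divides gcd(n,k) and f(X) = g(X^m) for some g ∈ Fq[X] }. Then the minimal polynomial m_{β^k} of β^k over Fq satisfies m_{β^k}(X^k) = ∏_{j=1}^{k/t} ζ_k^{−jn} f(ζ_k^{j} X). -/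
open Polynomial

namespace Stmt12Aux
variable {F : Type*} [Field F]

lemma coeff_comp_C_mul_X (p : F[X]) (b : F) (i : ℕ) :
    (p.comp (C b * X)).coeff i = b ^ i * p.coeff i := by
  induction p using Polynomial.induction_on' with
  | add p q hp hq => simp [add_comp, hp, hq, mul_add]
  | monomial e a =>
      simp only [monomial_comp, mul_pow, ← C_pow, ← mul_assoc, ← C_mul, coeff_C_mul,
        coeff_X_pow, coeff_monomial]
      by_cases h : i = e
      · subst h; simp [mul_comm]
      · simp [h, Ne.symm h]

lemma eq_expand_contract {p : F[X]} {s : ℕ} (hs : s ≠ 0)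
    (h : ∀ i, p.coeff i ≠ 0 → s ∣ i) : p = (expand F s) (p.contract s) := by
  ext i
  rw [coeff_expand hs.bot_lt, coeff_contract hs]
  split_ifs with hd
  · rw [Nat.div_mul_cancel hd]
  · by_contra hne
    exact hd (h i hne)

lemma comp_C_mul_X_comp (p : F[X]) (a b : F) :
    (p.comp (C a * X)).comp (C b * X) = p.comp (C (a * b) * X) := by
  rw [comp_assoc]
  congr 1
  rw [mul_comp, C_comp, X_comp, ← mul_assoc, ← C_mul]

lemma comp_X_pow_comp (g : F[X]) (t : ℕ) (a : F) :
    (g.comp (X ^ t)).comp (C a * X) = g.comp (C (a ^ t) * X ^ t) := by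
  rw [comp_assoc, pow_comp, X_comp, mul_pow, ← C_pow]

lemma irreducible_comp_C_mul_X {p : F[X]} (hp : Irreducible p) {a : F} (ha : a ≠ 0) :
    Irreducible (p.comp (C a * X)) := by
  have : Invertible a := invertibleOfNonzero ha
  have h := (MulEquiv.irreducible_iff (algEquivCMulXAddC a 0)).mpr hp
  simpa [algEquivCMulXAddC_apply, ← comp_eq_aeval] using h

end Stmt12Aux

open Stmt12Aux in
/-- Corollary. Let `k ∣ q − 1`, `ζ_k ∈ F_q` a primitive `k`-th root of
unity, `f ∈ F_q[X]`, `f ≠ X`, monic irreducible of degree `n`, and `β` a root of `f`. Set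
`t = max{ m : m ∣ gcd(n,k), f(X) = g(X^m) for some g ∈ F_q[X] }`. Then the minimal
polynomial of `β^k` over `F_q` satisfies
`m_{β^k}(X^k) = ∏_{j=1}^{k/t} ζ_k^{−jn} f(ζ_k^j X)`. -/
theorem stmt12 {F E : Type*} [Field F] [Fintype F] [Field E] [Algebra F E]
    (k : ℕ) (hk : 0 < k) (hkq : k ∣ Fintype.card F - 1)
    (ζ : F) (hζ : IsPrimitiveRoot ζ k)
    (f : F[X]) (n : ℕ) (hmonic : f.Monic) (hirr : Irreducible f) (hfX : f ≠ X)
    (hdeg : f.natDegree = n)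
    (β : E) (hβ : aeval β f = 0)
    (t : ℕ)
    (ht : IsGreatest {m : ℕ | m ∣ Nat.gcd n k ∧ ∃ g : F[X], f = g.comp (X ^ m)} t) :
    (minpoly F (β ^ k)).comp (X ^ k)
      = ∏ j ∈ Finset.Icc 1 (k / t),
          C ((ζ ^ (j * n))⁻¹) * f.comp (C (ζ ^ j) * X) := by
  classical
  set fj : ℕ → F[X] := fun j => C ((ζ ^ (j * n))⁻¹) * f.comp (C (ζ ^ j) * X) with hfjdef
  -- basic numerology
  have hn0 : 0 < n := hdeg ▸ hirr.natDegree_pos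
  have ht1 : 1 ≤ t := ht.2 ⟨one_dvd _, f, by simp⟩
  have htn : t ∣ n := ht.1.1.trans (Nat.gcd_dvd_left n k)
  have htk : t ∣ k := ht.1.1.trans (Nat.gcd_dvd_right n k)
  obtain ⟨g₀, hg₀⟩ := ht.1.2
  set K := k / t with hKdef
  have hKt : K * t = k := Nat.div_mul_cancel htk
  have hK1 : 1 ≤ K := by
    rcases Nat.eq_zero_or_pos K with h | h
    · rw [h, zero_mul] at hKt; omega
    · exact h
  have hKk : K ≤ k := Nat.div_le_self k t
  have hζ0 : ζ ≠ 0 := hζ.ne_zero hk.ne'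
  have hζp : ∀ j : ℕ, ζ ^ j ≠ 0 := fun j => pow_ne_zero _ hζ0
  have hζk : ζ ^ k = 1 := hζ.pow_eq_one
  have hζKn : ζ ^ (K * n) = 1 := by
    obtain ⟨n', hn'⟩ := htn
    have h1 : K * n = k * n' := by rw [hn', ← hKt]; ring
    rw [h1, pow_mul, hζk, one_pow]
  -- β integral
  have hβint : IsIntegral F β := ⟨f, hmonic, hβ⟩
  have hgint : IsIntegral F (β ^ k) := hβint.pow k
  have hgmonic : (minpoly F (β ^ k)).Monic := minpoly.monic hgint
  -- the factors are monic
  have hlc : ∀ j : ℕ, (f.comp (C (ζ ^ j) * X)).leadingCoeff = ζ ^ (j * n) := by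
    intro j
    rw [leadingCoeff_comp (by rw [natDegree_C_mul_X _ (hζp j)]; exact one_ne_zero),
      hmonic.leadingCoeff, leadingCoeff_C_mul_X, one_mul, hdeg, ← pow_mul]
  have hfjmonic : ∀ j : ℕ, (fj j).Monic := by
    intro j
    have : (fj j).leadingCoeff = 1 := by
      simp only [hfjdef, leadingCoeff_mul, leadingCoeff_C, hlc]
      exact inv_mul_cancel₀ (hζp _)
    exact this
  -- the factors are irreducible
  have hfjirr : ∀ j : ℕ, Irreducible (fj j) := by
    intro j
    simp only [hfjdef]
    exact (irreducible_isUnit_mul (isUnit_C.2 (isUnit_iff_ne_zero.2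
      (inv_ne_zero (hζp _))))).2 (irreducible_comp_C_mul_X hirr (hζp j))
  -- roots of the factors
  set u : E := algebraMap F E ζ with hudef
  have hu1 : u ^ k = 1 := by rw [hudef, ← map_pow, hζk, map_one]
  have hfjroot : ∀ j : ℕ, j ≤ k → aeval (u ^ (k - j) * β) (fj j) = 0 := by
    intro j hj
    simp only [hfjdef, map_mul, aeval_C, aeval_comp, aeval_X]
    have h1 : (algebraMap F E) (ζ ^ j) * (u ^ (k - j) * β) = β := by
      rw [hudef, ← map_pow, ← mul_assoc, ← map_mul, ← pow_add,
        Nat.add_sub_cancel' hj, hζk, map_one, one_mul]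
    rw [h1, hβ, mul_zero]
  have hfjdvd : ∀ j : ℕ, j ≤ k → fj j ∣ (minpoly F (β ^ k)).comp (X ^ k) := by
    intro j hj
    have hm : minpoly F (u ^ (k - j) * β) = fj j :=
      (minpoly.eq_of_irreducible_of_monic (hfjirr j) (hfjroot j hj) (hfjmonic j)).symm
    rw [← hm]
    apply minpoly.dvd
    rw [aeval_comp, aeval_X_pow, mul_pow, ← pow_mul, mul_comm (k - j) k, pow_mul,
      hu1, one_pow, one_mul]
    exact minpoly.aeval F (β ^ k)
  -- distinctness of the factors
  have hfjne : ∀ j₁ j₂ : ℕ, 1 ≤ j₁ → j₁ < j₂ → j₂ ≤ K → fj j₁ ≠ fj j₂ := by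
    intro j₁ j₂ hj₁ hlt hj₂ heq
    obtain ⟨m, rfl⟩ : ∃ m, j₂ = j₁ + m := ⟨j₂ - j₁, by omega⟩
    have hm1 : 1 ≤ m := by omega
    have hmK : m < K := by omega
    have hj₁k : j₁ ≤ k := by omega
    -- functional equation f(ζ^m X) = ζ^{mn} f(X)
    have hfe : f.comp (C (ζ ^ m) * X) = C (ζ ^ (m * n)) * f := by
      have h1 := congrArg (fun p => p.comp (C (ζ ^ (k - j₁)) * X)) heq
      simp only [hfjdef, mul_comp, C_comp, comp_C_mul_X_comp, ← pow_add] at h1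
      have e1 : j₁ + (k - j₁) = k := by omega
      have e2 : j₁ + m + (k - j₁) = k + m := by omega
      rw [e1, e2, hζk, C_1, one_mul, comp_X, pow_add, hζk, one_mul] at h1
      have h2 := congrArg (fun p => C (ζ ^ ((j₁ + m) * n)) * p) h1
      simp only [← mul_assoc, ← C_mul, mul_inv_cancel₀ (hζp ((j₁ + m) * n)), C_1,
        one_mul] at h2
      rw [← h2]
      congr 2
      have e3 : (j₁ + m) * n = m * n + j₁ * n := by ring
      rw [e3, pow_add, mul_assoc, mul_inv_cancel₀ (hζp (j₁ * n)), mul_one]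
    have hcoef : ∀ i, f.coeff i ≠ 0 → ζ ^ (m * i) = ζ ^ (m * n) := by
      intro i hi
      have h3 := congrArg (fun p => p.coeff i) hfe
      simp only [coeff_comp_C_mul_X, coeff_C_mul] at h3
      have h4 : (ζ ^ m) ^ i = ζ ^ (m * n) := mul_right_cancel₀ hi h3
      rwa [← pow_mul] at h4
    have hdvdk : ∀ i, f.coeff i ≠ 0 → k ∣ m * (n - i) := by
      intro i hi
      have hin : i ≤ n := hdeg ▸ le_natDegree_of_ne_zero hi
      have h5 : ζ ^ (m * i) * ζ ^ (m * (n - i)) = ζ ^ (m * i) * 1 := by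
        rw [mul_one, ← pow_add, ← mul_add, Nat.add_sub_cancel' hin]
        exact (hcoef i hi).symm
      have h6 : ζ ^ (m * (n - i)) = 1 := mul_left_cancel₀ (hζp _) h5
      exact (hζ.pow_eq_one_iff_dvd _).1 h6
    set d := Nat.gcd k m with hd
    have hd0 : 0 < d := Nat.gcd_pos_of_pos_right _ (by omega)
    set s := k / d with hs
    have hsd : s * d = k := Nat.div_mul_cancel (Nat.gcd_dvd_left k m)
    have hsk : s ∣ k := ⟨d, hsd.symm⟩
    have hs0 : s ≠ 0 := by
      intro h0
      rw [h0, zero_mul] at hsd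
      omega
    have hcop : Nat.Coprime s (m / d) := Nat.coprime_div_gcd_div_gcd hd0
    have hmd : d * (m / d) = m := Nat.mul_div_cancel' (Nat.gcd_dvd_right k m)
    have hsdvd : ∀ i, f.coeff i ≠ 0 → s ∣ n - i := by
      intro i hi
      have h5 := hdvdk i hi
      have h6 : s * d ∣ d * ((m / d) * (n - i)) := by
        rw [hsd, ← mul_assoc, hmd]
        exact h5
      rw [mul_comm s d] at h6
      have h7 : s ∣ (m / d) * (n - i) :=
        (mul_dvd_mul_iff_left (show (d : ℕ) ≠ 0 by omega)).1 h6
      exact hcop.dvd_of_dvd_mul_left h7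
    have hc0 : f.coeff 0 ≠ 0 := by
      intro h0
      obtain ⟨c, hc⟩ := X_dvd_iff.2 h0
      rcases hirr.isUnit_or_isUnit hc with hu | hu
      · exact Polynomial.not_isUnit_X hu
      · have hassoc : Associated X f := ⟨hu.unit, by rw [IsUnit.unit_spec, ← hc]⟩
        exact hfX (eq_of_monic_of_associated hmonic monic_X hassoc.symm)
    have hsn : s ∣ n := by simpa using hsdvd 0 hc0
    have hsmem : s ∈ {m : ℕ | m ∣ Nat.gcd n k ∧ ∃ g : F[X], f = g.comp (X ^ m)} := by
      refine ⟨Nat.dvd_gcd hsn hsk, f.contract s, ?_⟩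
      rw [← expand_eq_comp_X_pow]
      refine eq_expand_contract hs0 fun i hi => ?_
      have hin : i ≤ n := hdeg ▸ le_natDegree_of_ne_zero hi
      have := Nat.dvd_sub hsn (hsdvd i hi)
      rwa [Nat.sub_sub_self hin] at this
    have hst : s ≤ t := ht.2 hsmem
    have hdm : d ≤ m := Nat.le_of_dvd (by omega) (Nat.gcd_dvd_right k m)
    have htd : t * d < k := by
      calc t * d < t * K := by
            exact mul_lt_mul_of_pos_left (by omega) (by omega)
        _ = k := by rw [mul_comm]; exact hKt
    have hts : t < s := by
      have : t * d < s * d := by rw [hsd]; exact htd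
      exact Nat.lt_of_mul_lt_mul_right this
    omega
  -- the comp-(ζX) identity for the product
  have hstep : ∀ j : ℕ, (fj j).comp (C ζ * X) = C (ζ ^ n) * fj (j + 1) := by
    intro j
    simp only [hfjdef, mul_comp, C_comp, comp_C_mul_X_comp, ← pow_succ]
    rw [← mul_assoc, ← C_mul]
    congr 2
    have e3 : (j + 1) * n = j * n + n := by ring
    rw [e3, pow_add]
    field_simp
  have hper : fj (K + 1) = fj 1 := by
    simp only [hfjdef]
    congr 1
    · congr 1
      have e : (K + 1) * n = K * n + n := by ring
      rw [one_mul, e, pow_add, hζKn, one_mul]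
    · rw [hg₀, comp_X_pow_comp, comp_X_pow_comp]
      congr 2
      rw [← pow_mul, ← pow_mul]
      have e4 : (K + 1) * t = k + t := by rw [add_mul, one_mul, hKt]
      rw [one_mul, e4, pow_add, hζk, one_mul]
  have hcompprod : (∏ j ∈ Finset.Icc 1 K, fj j).comp (C ζ * X)
      = ∏ j ∈ Finset.Icc 1 K, fj j := by
    rw [comp_eq_aeval, map_prod]
    simp only [← comp_eq_aeval, hstep]
    rw [Finset.prod_mul_distrib, Finset.prod_const, Nat.card_Icc]
    have e5 : K + 1 - 1 = K := by omega
    rw [e5, ← C_pow, ← pow_mul, mul_comm n K, hζKn, C_1, one_mul]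
    have h8 : ∏ j ∈ Finset.Icc 1 K, fj (j + 1) = ∏ j ∈ Finset.Icc 2 (K + 1), fj j := by
      have : Finset.Icc 2 (K + 1) = (Finset.Icc 1 K).map (addRightEmbedding 1) := by
        rw [Finset.map_add_right_Icc]
      rw [this, Finset.prod_map]
      rfl
    rw [h8]
    have h9 : Finset.Icc 2 (K + 1) = Finset.Ioc 1 (K + 1) := by
      ext x; simp; omega
    rw [h9, Finset.prod_Ioc_succ_top hK1, hper,
      Finset.Icc_eq_cons_Ioc hK1, Finset.prod_cons, mul_comm]
  -- coefficients of the product vanish away from multiples of k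
  have hhcoeff : ∀ i, (∏ j ∈ Finset.Icc 1 K, fj j).coeff i ≠ 0 → k ∣ i := by
    intro i hi
    have h10 := congrArg (fun p => p.coeff i) hcompprod
    simp only [coeff_comp_C_mul_X] at h10
    have h11 : ζ ^ i * (∏ j ∈ Finset.Icc 1 K, fj j).coeff i
        = 1 * (∏ j ∈ Finset.Icc 1 K, fj j).coeff i := by rw [one_mul]; exact h10
    have h12 : ζ ^ i = 1 := mul_right_cancel₀ hi h11
    exact (hζ.pow_eq_one_iff_dvd i).1 h12
  -- β is a root of the product
  have hfjK0 : aeval β (fj K) = 0 := by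
    simp only [hfjdef, map_mul, aeval_C]
    have h13 : aeval β (f.comp (C (ζ ^ K) * X)) = 0 := by
      rw [hg₀, comp_X_pow_comp, aeval_comp]
      simp only [map_mul, aeval_C, aeval_X_pow, ← pow_mul, hKt, hζk, map_one, one_mul]
      have h14 : aeval (β ^ t) g₀ = aeval β f := by rw [hg₀, aeval_comp, aeval_X_pow]
      rw [h14, hβ]
    rw [h13, mul_zero]
  have hhβ : aeval β (∏ j ∈ Finset.Icc 1 K, fj j) = 0 := by
    rw [map_prod]
    exact Finset.prod_eq_zero (Finset.mem_Icc.2 ⟨hK1, le_refl K⟩) hfjK0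
  set h := ∏ j ∈ Finset.Icc 1 K, fj j with hhdef
  have hexp : h = expand F k (h.contract k) := eq_expand_contract hk.ne' hhcoeff
  have hHroot : aeval (β ^ k) (contract k h) = 0 := by
    have h15 := hhβ
    rw [hexp, expand_aeval] at h15
    exact h15
  have hgdvdH : minpoly F (β ^ k) ∣ contract k h := minpoly.dvd F _ hHroot
  have hcompdvd : (minpoly F (β ^ k)).comp (X ^ k) ∣ h := by
    have h16 := map_dvd (expand F k) hgdvdH
    rw [← hexp] at h16
    rwa [expand_eq_comp_X_pow] at h16
  have hcoprime : ((Finset.Icc 1 K : Finset ℕ) : Set ℕ).Pairwise (Function.onFun IsCoprime fj) := by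
    intro j₁ h₁ j₂ h₂ hne
    simp only [Finset.coe_Icc, Set.mem_Icc] at h₁ h₂
    have hne' : fj j₁ ≠ fj j₂ := by
      rcases lt_or_gt_of_ne hne with hlt | hgt
      · exact hfjne j₁ j₂ h₁.1 hlt h₂.2
      · exact fun e => hfjne j₂ j₁ h₂.1 hgt h₁.2 e.symm
    rw [Function.onFun, (hfjirr j₁).coprime_iff_not_dvd]
    intro hdvd'
    exact hne' (eq_of_monic_of_associated (hfjmonic j₁) (hfjmonic j₂)
      ((hfjirr j₁).associated_of_dvd (hfjirr j₂) hdvd'))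
  have hproddvd : h ∣ (minpoly F (β ^ k)).comp (X ^ k) :=
    Finset.prod_dvd_of_coprime hcoprime fun j hj =>
      hfjdvd j (le_trans (Finset.mem_Icc.1 hj).2 hKk)
  have hhmonic : h.Monic := monic_prod_of_monic _ _ fun j _ => hfjmonic j
  have hcompmonic : ((minpoly F (β ^ k)).comp (X ^ k)).Monic :=
    hgmonic.comp (monic_X_pow k) (by rw [natDegree_X_pow]; omega)
  exact eq_of_monic_of_associated hcompmonic hhmonic
    (associated_of_dvd_dvd hcompdvd hproddvd)
end

section
/- Let k be a positive integer dividing q − 1, let ζ_k ∈ Fq be a primitive k-th root of unity, let f ∈ Fq[X], f ≠ X, be a monic irreducible polynomial of degree n, and let β ∈ F_{q^n} be a root of f. Set t = max{ m : m divides gcd(n,k) and f(X) = g(X^m) for some g ∈ Fq[X] }. Then the polynomials ζ_k^{−jn} f(ζ_k^{j} X) for 1 ≤ j ≤ k/t are pairwise distinct monic irreducible polynomials over Fq, and the characteristic polynomial of β^k over Fq satisfies χ_{β^k}(X^k) = ( ∏_{j=1}^{k/t} ζ_k^{−jn} f(ζ_k^{j} X) )^t. -/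
open Polynomial Finset

lemma aux_coeff_comp {R : Type*} [CommRing R] (p : R[X]) (c : R) (i : ℕ) :
    (p.comp (C c * X)).coeff i = c ^ i * p.coeff i := by
  rw [comp_eq_sum_left, Polynomial.sum_def, finset_sum_coeff]
  simp only [mul_pow, ← C_pow, ← mul_assoc, ← C_mul, coeff_C_mul, coeff_X_pow]
  rw [Finset.sum_congr rfl (fun e _ => by rw [mul_ite, mul_one, mul_zero])]
  rw [Finset.sum_congr rfl (fun e _ => by rw [show (if i = e then p.coeff e * c ^ e else 0) = if e = i then p.coeff e * c ^ e else 0 from by simp [eq_comm]])]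
  rw [Finset.sum_ite_eq' p.support i (fun e => p.coeff e * c ^ e)]
  split_ifs with h
  · ring
  · rw [Polynomial.notMem_support_iff.mp h, mul_zero]

lemma aux_irred {F : Type*} [Field F] {f : F[X]} (hf : Irreducible f) {c : F} (hc : c ≠ 0) :
    Irreducible (f.comp (C c * X)) := by
  have h1 : (C c * X).comp (C c⁻¹ * X) = X := by
    simp [mul_comp, mul_assoc, ← C_mul, mul_inv_cancel₀ hc]
    ring_nf
    rw [← C_mul, mul_inv_cancel₀ hc, C_1, one_mul]
  have h2 : (C c⁻¹ * X).comp (C c * X) = X := by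
    simp [mul_comp, mul_assoc, ← C_mul, inv_mul_cancel₀ hc]
    ring_nf
    rw [← C_mul, inv_mul_cancel₀ hc, C_1, one_mul]
  let e := algEquivOfCompEqX (C c * X) (C c⁻¹ * X) h1 h2
  have : f.comp (C c * X) = e f := rfl
  rw [this]
  exact hf.map (f := e)

lemma aux_minpoly_prod {F E : Type*} [Field F] [Fintype F] [Field E] [Algebra F E]
    {f : F[X]} {n : ℕ} (hmonic : f.Monic) (hirr : Irreducible f) (hdeg : f.natDegree = n)
    {β : E} (hβ : aeval β f = 0) :
    f.map (algebraMap F E) = ∏ i ∈ Finset.range n, (X - C (β ^ Fintype.card F ^ i)) := by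
  classical
  set q := Fintype.card F with hqdef
  have hn : 0 < n := hdeg ▸ hirr.natDegree_pos
  have hρ : Function.Injective (algebraMap F E) := (algebraMap F E).injective
  set p := ringChar F with hpdef
  haveI : CharP F p := ringChar.charP F
  have hp : p.Prime := CharP.char_is_prime F p
  obtain ⟨e, -, hqe⟩ := FiniteField.card F p
  haveI : CharP E p := charP_of_injective_algebraMap hρ p
  haveI : Fact p.Prime := ⟨hp⟩
  let φ : E →+* E := iterateFrobenius E p e
  have hφ : ∀ x : E, φ x = x ^ q := fun x => by
    show iterateFrobenius E p e x = x ^ q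
    rw [iterateFrobenius_def, ← hqe]
  have hcomm : ∀ a : F, φ (algebraMap F E a) = algebraMap F E a := fun a => by
    rw [hφ, ← map_pow, FiniteField.pow_card]
  let φa : E →ₐ[F] E := { φ with commutes' := hcomm }
  have hφa : ∀ x : E, φa x = x ^ q := hφ
  have hroots : ∀ i : ℕ, aeval (β ^ q ^ i) f = 0 := by
    intro i
    induction i with
    | zero => simpa using hβ
    | succ i ih =>
      have h1 : β ^ q ^ (i + 1) = φa (β ^ q ^ i) := by rw [hφa, ← pow_mul, pow_succ]
      rw [h1, Polynomial.aeval_algHom_apply, ih, map_zero]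
  have hint : IsIntegral F β := ⟨f, hmonic, hβ⟩
  have hmin : minpoly F β = f := (minpoly.eq_of_irreducible_of_monic hirr hβ hmonic).symm
  haveI := IntermediateField.adjoin.finiteDimensional hint
  haveI : Finite (IntermediateField.adjoin F {β} : IntermediateField F E) :=
    Module.finite_of_finite F
  haveI : Fintype (IntermediateField.adjoin F {β} : IntermediateField F E) :=
    Fintype.ofFinite _
  have hβqn : β ^ q ^ n = β := by
    have h1 : Module.finrank F (IntermediateField.adjoin F {β} : IntermediateField F E) = n := by
      rw [IntermediateField.adjoin.finrank hint, hmin, hdeg]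
    have h2 : Fintype.card (IntermediateField.adjoin F {β} : IntermediateField F E) = q ^ n := by
      rw [Module.card_eq_pow_finrank (K := F), h1]
    have h3 := FiniteField.pow_card (IntermediateField.AdjoinSimple.gen F β)
    rw [h2] at h3
    calc β ^ q ^ n = ((IntermediateField.AdjoinSimple.gen F β ^ q ^ n :
          (IntermediateField.adjoin F {β} : IntermediateField F E)) : E) := by
          push_cast [IntermediateField.AdjoinSimple.coe_gen]; rfl
      _ = β := by rw [h3, IntermediateField.AdjoinSimple.coe_gen]
  have hfix : ∀ x : E, x ^ q = x → ∃ a : F, algebraMap F E a = x := by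
    intro x hx
    have hq1 : 1 < q := Fintype.one_lt_card
    set g : E[X] := X ^ q - X with hg
    have hgne : g ≠ 0 := by
      intro h
      have : g.coeff q = 1 := by
        rw [hg, coeff_sub, coeff_X_pow, if_pos rfl, coeff_X, if_neg (by omega), sub_zero]
      rw [h, coeff_zero] at this
      exact one_ne_zero this.symm
    have hgdeg : g.natDegree ≤ q := by
      refine le_trans (natDegree_sub_le _ _) ?_
      simp [natDegree_X_pow]
      omega
    set s : Finset E := Finset.univ.image (algebraMap F E) with hs
    have hscard : s.card = q := by
      rw [hs, Finset.card_image_of_injective _ hρ, Finset.card_univ]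
    have hroot : ∀ y ∈ s, y ∈ g.roots.toFinset := by
      intro y hy
      obtain ⟨a, -, rfl⟩ := Finset.mem_image.mp hy
      rw [Multiset.mem_toFinset, mem_roots hgne]
      have hpc : (algebraMap F E a) ^ q = algebraMap F E a := by
        rw [← map_pow, hqdef, FiniteField.pow_card]
      simp [hg, IsRoot, hpc]
    have hsub : s ⊆ g.roots.toFinset := hroot
    have hcardle : g.roots.toFinset.card ≤ s.card := by
      rw [hscard]
      exact le_trans (Multiset.toFinset_card_le _) (le_trans (Polynomial.card_roots' g) hgdeg)
    have heq : s = g.roots.toFinset := Finset.eq_of_subset_of_card_le hsub hcardle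
    have hxin : x ∈ g.roots.toFinset := by
      rw [Multiset.mem_toFinset, mem_roots hgne]
      simp [hg, IsRoot, hx]
    rw [← heq] at hxin
    obtain ⟨a, -, ha⟩ := Finset.mem_image.mp hxin
    exact ⟨a, ha⟩
  set G : E[X] := ∏ i ∈ Finset.range n, (X - C (β ^ q ^ i)) with hG
  have hGmonic : G.Monic := monic_prod_of_monic _ _ fun i _ => monic_X_sub_C _
  have hGdeg : G.natDegree = n := by
    rw [hG, natDegree_prod _ _ (fun i _ => X_sub_C_ne_zero _),
      Finset.sum_congr rfl fun i _ => natDegree_X_sub_C _]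
    simp
  have hGmap : G.map φ = G := by
    rw [hG, Polynomial.map_prod]
    simp only [Polynomial.map_sub, map_X, map_C, hφ]
    have hpow : ∀ i : ℕ, (β ^ q ^ i) ^ q = β ^ q ^ (i + 1) := fun i => by
      rw [← pow_mul, pow_succ]
    simp only [hpow]
    have hcancel : (∏ i ∈ Finset.range n, (X - C (β ^ q ^ (i + 1)))) * (X - C (β ^ q ^ 0)) =
        (∏ i ∈ Finset.range n, (X - C (β ^ q ^ i))) * (X - C (β ^ q ^ 0)) := by
      rw [← Finset.prod_range_succ' (fun i => X - C (β ^ q ^ i)) n, Finset.prod_range_succ]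
      congr 1
      rw [hβqn, pow_zero, pow_one]
    exact mul_right_cancel₀ (X_sub_C_ne_zero _) hcancel
  have hGlift : G ∈ Polynomial.lifts (algebraMap F E) := by
    rw [Polynomial.lifts_iff_coeff_lifts]
    intro i
    have h1 : φ (G.coeff i) = G.coeff i := by
      rw [← Polynomial.coeff_map, hGmap]
    rw [hφ] at h1
    obtain ⟨a, ha⟩ := hfix _ h1
    exact ⟨a, ha⟩
  obtain ⟨g, hgmap, hgdeg, hgmonic⟩ := Polynomial.lifts_and_degree_eq_and_monic hGlift hGmonic
  have hgβ : aeval β g = 0 := by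
    rw [aeval_def, ← eval_map, hgmap, hG, eval_prod]
    refine Finset.prod_eq_zero (Finset.mem_range.mpr hn) ?_
    simp
  have hdvd : f ∣ g := hmin ▸ minpoly.dvd F β hgβ
  have hgnd : g.natDegree = n := by
    have : g.natDegree = G.natDegree := by
      unfold Polynomial.natDegree
      rw [hgdeg]
    rw [this, hGdeg]
  have hfg : f = g := by
    obtain ⟨c, rfl⟩ := hdvd
    have hc0 : c ≠ 0 := fun h => by
      rw [h, mul_zero] at hgmonic
      exact hgmonic.ne_zero rfl
    have hnd : f.natDegree + c.natDegree = n := by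
      rw [← natDegree_mul hmonic.ne_zero hc0, hgnd]
    have hcnd : c.natDegree = 0 := by
      rw [hdeg] at hnd
      omega
    obtain ⟨a, rfl⟩ := Polynomial.natDegree_eq_zero.mp hcnd
    have : (f * C a).leadingCoeff = 1 := hgmonic
    rw [leadingCoeff_mul, leadingCoeff_C, hmonic.leadingCoeff, one_mul] at this
    rw [this, C_1, mul_one]
  rw [hfg, hgmap]

noncomputable def P13 {F : Type*} [Field F] (ζ : F) (n : ℕ) (f : F[X]) (j : ℕ) : F[X] :=
  C ((ζ ^ (j * n))⁻¹) * f.comp (C (ζ ^ j) * X)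

/-- Let `k ∣ q − 1`, `ζ_k ∈ F_q` a primitive `k`-th root of unity,
`f ∈ F_q[X]`, `f ≠ X`, monic irreducible of degree `n`, and `β` a root of `f`. Set
`t = max{ m : m ∣ gcd(n,k), f(X) = g(X^m) for some g ∈ F_q[X] }`. Then the polynomials
`ζ_k^{−jn} f(ζ_k^j X)` for `1 ≤ j ≤ k/t` are pairwise distinct monic irreducible
polynomials over `F_q`, and the characteristic polynomial
`χ_{β^k}(X) = ∏_{i=0}^{n-1} (X − (β^k)^{q^i}) ∈ F_q[X]` satisfies
`χ_{β^k}(X^k) = (∏_{j=1}^{k/t} ζ_k^{−jn} f(ζ_k^j X))^t`. -/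
theorem stmt13 {F E : Type*} [Field F] [Fintype F] [Field E] [Algebra F E]
    (k : ℕ) (hk : 0 < k) (hkq : k ∣ Fintype.card F - 1)
    (ζ : F) (hζ : IsPrimitiveRoot ζ k)
    (f : F[X]) (n : ℕ) (hmonic : f.Monic) (hirr : Irreducible f) (hfX : f ≠ X)
    (hdeg : f.natDegree = n)
    (β : E) (hβ : aeval β f = 0)
    (t : ℕ)
    (ht : IsGreatest {m : ℕ | m ∣ Nat.gcd n k ∧ ∃ g : F[X], f = g.comp (X ^ m)} t)
    (χ : F[X])
    (hχ : χ.map (algebraMap F E)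
      = ∏ i ∈ Finset.range n, (X - C ((β ^ k) ^ Fintype.card F ^ i))) :
    (∀ j ∈ Finset.Icc 1 (k / t),
        (C ((ζ ^ (j * n))⁻¹) * f.comp (C (ζ ^ j) * X)).Monic ∧
        Irreducible (C ((ζ ^ (j * n))⁻¹) * f.comp (C (ζ ^ j) * X))) ∧
    Set.InjOn (fun j : ℕ => C ((ζ ^ (j * n))⁻¹) * f.comp (C (ζ ^ j) * X))
      (Finset.Icc 1 (k / t)) ∧
    χ.comp (X ^ k)
      = (∏ j ∈ Finset.Icc 1 (k / t), C ((ζ ^ (j * n))⁻¹) * f.comp (C (ζ ^ j) * X)) ^ t := by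
  classical
  suffices h : (∀ j ∈ Finset.Icc 1 (k / t), (P13 ζ n f j).Monic ∧ Irreducible (P13 ζ n f j)) ∧
      Set.InjOn (fun j : ℕ => P13 ζ n f j) (Finset.Icc 1 (k / t)) ∧
      χ.comp (X ^ k) = (∏ j ∈ Finset.Icc 1 (k / t), P13 ζ n f j) ^ t by
    exact h
  have hρ : Function.Injective (algebraMap F E) := (algebraMap F E).injective
  have hn : 0 < n := hdeg ▸ hirr.natDegree_pos
  have hζ0 : ζ ≠ 0 := by
    intro h
    have := hζ.pow_eq_one
    rw [h, zero_pow hk.ne'] at this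
    exact zero_ne_one this
  have ha0 : f.coeff 0 ≠ 0 := by
    intro h
    obtain ⟨e, he⟩ := Polynomial.X_dvd_iff.mpr h
    rcases hirr.isUnit_or_isUnit he with hu | hu
    · exact Polynomial.not_isUnit_X hu
    · obtain ⟨r, -, rfl⟩ := Polynomial.isUnit_iff.mp hu
      have hlc : f.leadingCoeff = r := by
        rw [he, leadingCoeff_mul, leadingCoeff_X, leadingCoeff_C, one_mul]
      rw [hmonic.leadingCoeff] at hlc
      rw [he, ← hlc, C_1, mul_one] at hfX
      exact hfX rfl
  have h0supp : (0 : ℕ) ∈ f.support := Polynomial.mem_support_iff.mpr ha0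
  have hnsupp : n ∈ f.support := by
    rw [Polynomial.mem_support_iff, ← hdeg, hmonic.coeff_natDegree]
    exact one_ne_zero
  have ht0 : 0 < t := by
    rcases Nat.eq_zero_or_pos t with h | h
    · exfalso
      have h1 := ht.1.1
      rw [h, zero_dvd_iff] at h1
      have := Nat.eq_zero_of_gcd_eq_zero_right h1
      omega
    · exact h
  have htn : t ∣ n := ht.1.1.trans (Nat.gcd_dvd_left n k)
  have htk : t ∣ k := ht.1.1.trans (Nat.gcd_dvd_right n k)
  have hsupp_of : ∀ m : ℕ, 0 < m → (∃ g : F[X], f = g.comp (X ^ m)) →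
      ∀ i ∈ f.support, m ∣ i := by
    intro m hm hex i hi
    obtain ⟨g, hg⟩ := hex
    by_contra hnd
    apply Polynomial.mem_support_iff.mp hi
    rw [hg, ← Polynomial.expand_eq_comp_X_pow, Polynomial.coeff_expand hm]
    simp [hnd]
  have hof_supp : ∀ m : ℕ, 0 < m → (∀ i ∈ f.support, m ∣ i) →
      ∃ g : F[X], f = g.comp (X ^ m) := by
    intro m hm hdvd
    refine ⟨Polynomial.contract m f, ?_⟩
    rw [← Polynomial.expand_eq_comp_X_pow]
    ext i
    rw [Polynomial.coeff_expand hm, Polynomial.coeff_contract hm.ne']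
    split_ifs with h
    · rw [Nat.div_mul_cancel h]
    · by_contra hne
      exact h (hdvd i (Polynomial.mem_support_iff.mpr hne))
  have hsupp : ∀ i ∈ f.support, t ∣ i := hsupp_of t ht0 ht.1.2
  set d := f.support.gcd id with hd
  have hdn : d ∣ n := Finset.gcd_dvd hnsupp
  have hd0 : 0 < d := by
    rcases Nat.eq_zero_or_pos d with h | h
    · rw [h] at hdn
      have := zero_dvd_iff.mp hdn
      omega
    · exact h
  have htd : t = Nat.gcd k d := by
    have h1 : t ∣ Nat.gcd k d := Nat.dvd_gcd htk (Finset.dvd_gcd hsupp)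
    have hgd0 : 0 < Nat.gcd k d := Nat.gcd_pos_of_pos_left d hk
    have h2 : Nat.gcd k d ∈ {m : ℕ | m ∣ Nat.gcd n k ∧ ∃ g : F[X], f = g.comp (X ^ m)} := by
      constructor
      · exact Nat.dvd_gcd ((Nat.gcd_dvd_right k d).trans hdn) (Nat.gcd_dvd_left k d)
      · exact hof_supp _ hgd0 fun i hi => ((Nat.gcd_dvd_right k d).trans (Finset.gcd_dvd hi))
    exact le_antisymm (Nat.le_of_dvd hgd0 h1) (ht.2 h2)
  set s := k / t with hsdef
  have hst : s * t = k := Nat.div_mul_cancel htk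
  have hs0 : 0 < s := Nat.div_pos (Nat.le_of_dvd hk htk) ht0
  have coeffP : ∀ j i : ℕ,
      (P13 ζ n f j).coeff i = (ζ ^ (j * n))⁻¹ * (ζ ^ (j * i) * f.coeff i) := by
    intro j i
    rw [P13, coeff_C_mul, aux_coeff_comp, ← pow_mul]
  have hper1 : ∀ i : ℕ, t ∣ i → ζ ^ (s * i) = 1 := by
    rintro i ⟨i', rfl⟩
    rw [show s * (t * i') = k * i' by rw [← hst]; ring, pow_mul, hζ.pow_eq_one, one_pow]
  have hper : ∀ j : ℕ, P13 ζ n f (j + s) = P13 ζ n f j := by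
    intro j
    ext i
    rw [coeffP, coeffP]
    rcases eq_or_ne (f.coeff i) 0 with h | h
    · rw [h, mul_zero, mul_zero, mul_zero, mul_zero]
    · have hti : t ∣ i := hsupp i (Polynomial.mem_support_iff.mpr h)
      have e1 : ζ ^ ((j + s) * n) = ζ ^ (j * n) := by
        rw [show (j + s) * n = j * n + s * n by ring, pow_add, hper1 n htn, mul_one]
      have e2 : ζ ^ ((j + s) * i) = ζ ^ (j * i) := by
        rw [show (j + s) * i = j * i + s * i by ring, pow_add, hper1 i hti, mul_one]
      rw [e1, e2]
  have hperm : ∀ r j : ℕ, P13 ζ n f (j + s * r) = P13 ζ n f j := by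
    intro r
    induction r with
    | zero => simp
    | succ r ih =>
      intro j
      rw [show j + s * (r + 1) = (j + s * r) + s by ring, hper, ih]
  have hPdeg : ∀ j : ℕ, (P13 ζ n f j).natDegree = n := by
    intro j
    rw [P13, natDegree_C_mul (inv_ne_zero (pow_ne_zero _ hζ0)), natDegree_comp,
      natDegree_C_mul (pow_ne_zero _ hζ0), natDegree_X, mul_one, hdeg]
  have hPmonic : ∀ j : ℕ, (P13 ζ n f j).Monic := by
    intro j
    have hc : (P13 ζ n f j).coeff n = 1 := by
      rw [coeffP]
      rw [show f.coeff n = 1 from by rw [← hdeg, hmonic.coeff_natDegree]]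
      rw [mul_one, inv_mul_cancel₀ (pow_ne_zero _ hζ0)]
    rw [Polynomial.Monic, Polynomial.leadingCoeff, hPdeg]
    exact hc
  have hPirr : ∀ j : ℕ, Irreducible (P13 ζ n f j) := by
    intro j
    rw [P13]
    exact (irreducible_isUnit_mul
      (Polynomial.isUnit_C.mpr (Ne.isUnit (inv_ne_zero (pow_ne_zero _ hζ0))))).mpr
      (aux_irred hirr (pow_ne_zero _ hζ0))
  refine ⟨fun j _ => ⟨hPmonic j, hPirr j⟩, ?_, ?_⟩
  · -- injectivity
    have claim : ∀ j' j : ℕ, 1 ≤ j' → j' ≤ j → j ≤ s → P13 ζ n f j = P13 ζ n f j' → j = j' := by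
      intro j' j h1 h2 h3 heq
      set c := j - j' with hc
      have hj : j = j' + c := by omega
      have hcoeff : ∀ i : ℕ, (ζ ^ (j * n))⁻¹ * (ζ ^ (j * i) * f.coeff i)
          = (ζ ^ (j' * n))⁻¹ * (ζ ^ (j' * i) * f.coeff i) := by
        intro i
        rw [← coeffP, ← coeffP, heq]
      have h0 : (ζ ^ (j * n))⁻¹ = (ζ ^ (j' * n))⁻¹ := by
        have h5 := hcoeff 0
        simp only [mul_zero, pow_zero, one_mul] at h5
        exact mul_right_cancel₀ ha0 h5
      have hzc : ∀ i ∈ f.support, ζ ^ (c * i) = 1 := by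
        intro i hi
        have hai := Polynomial.mem_support_iff.mp hi
        have h6 := hcoeff i
        rw [h0] at h6
        have h4 : ζ ^ (j * i) = ζ ^ (j' * i) := by
          rw [← mul_assoc, ← mul_assoc] at h6
          have h7 := mul_right_cancel₀ hai h6
          exact mul_left_cancel₀ (inv_ne_zero (pow_ne_zero _ hζ0)) h7
        have h5 : ζ ^ (j' * i) * ζ ^ (c * i) = ζ ^ (j' * i) * 1 := by
          rw [mul_one, ← pow_add, ← h4, hj]
          ring_nf
        exact mul_left_cancel₀ (pow_ne_zero _ hζ0) h5
      have hkdvd : ∀ i ∈ f.support, k ∣ c * i := fun i hi =>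
        (hζ.pow_eq_one_iff_dvd _).mp (hzc i hi)
      have hkcd : k ∣ c * d := by
        have h7 : k ∣ f.support.gcd (fun i => c * (id i)) := Finset.dvd_gcd hkdvd
        rwa [Finset.gcd_mul_left, normalize_eq] at h7
      have hsdvd : s ∣ c := by
        have hcop : Nat.Coprime (k / Nat.gcd k d) (d / Nat.gcd k d) :=
          Nat.coprime_div_gcd_div_gcd (Nat.gcd_pos_of_pos_left d hk)
        rw [← htd] at hcop
        obtain ⟨d', hd'⟩ : t ∣ d := htd ▸ Nat.gcd_dvd_right k d
        obtain ⟨m, hm⟩ := hkcd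
        have h8 : s ∣ c * d' := by
          refine ⟨m, ?_⟩
          have h9 : t * (c * d') = t * (s * m) := by
            calc t * (c * d') = c * (t * d') := by ring
              _ = c * d := by rw [← hd']
              _ = k * m := hm
              _ = s * t * m := by rw [← hst]
              _ = t * (s * m) := by ring
          exact Nat.eq_of_mul_eq_mul_left ht0 h9
        have hcop2 : Nat.Coprime s d' := by
          have : d / t = d' := by rw [hd', Nat.mul_div_cancel_left d' ht0]
          rwa [← hsdef, this] at hcop
        exact (Nat.Coprime.dvd_of_dvd_mul_right hcop2) h8
      rcases Nat.eq_zero_or_pos c with h | h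
      · omega
      · have := Nat.le_of_dvd h hsdvd
        omega
    intro a ha b hb hab
    simp only [Finset.coe_Icc, Set.mem_Icc] at ha hb
    simp only at hab
    rcases le_total a b with h | h
    · exact (claim a b ha.1 h hb.2 hab.symm).symm
    · exact claim b a hb.1 h ha.2 hab
  · -- product identity
    have hsplit : ∀ r : ℕ, ∏ j ∈ Finset.Ioc 0 (s * r), P13 ζ n f j
        = (∏ j ∈ Finset.Ioc 0 s, P13 ζ n f j) ^ r := by
      intro r
      induction r with
      | zero => simp
      | succ r ih =>
        rw [show s * (r + 1) = s * r + s by ring,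
          ← Finset.prod_Ioc_consecutive _ (Nat.zero_le (s * r)) (Nat.le_add_right (s * r) s), ih]
        have h10 : ∏ j ∈ Finset.Ioc (s * r) (s * r + s), P13 ζ n f j
            = ∏ j ∈ Finset.Ioc 0 s, P13 ζ n f j := by
          rw [show Finset.Ioc (s * r) (s * r + s) = (Finset.Ioc 0 s).map (addLeftEmbedding (s * r))
              from by rw [Finset.map_add_left_Ioc, add_zero],
            Finset.prod_map]
          refine Finset.prod_congr rfl fun j _ => ?_
          show P13 ζ n f (s * r + j) = P13 ζ n f j
          rw [add_comm, hperm]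
        rw [h10, pow_succ]
    have key1 : ∏ j ∈ Finset.Icc 1 k, P13 ζ n f j
        = (∏ j ∈ Finset.Icc 1 s, P13 ζ n f j) ^ t := by
      rw [show (1 : ℕ) = 0 + 1 from rfl, Finset.Icc_add_one_left_eq_Ioc, Finset.Icc_add_one_left_eq_Ioc, ← hst,
        hsplit]
    have hfmap := aux_minpoly_prod hmonic hirr hdeg hβ
    have hζ' : IsPrimitiveRoot (algebraMap F E ζ) k := hζ.map_of_injective hρ
    set ζ' := algebraMap F E ζ with hζ'def
    have hζ'0 : ζ' ≠ 0 := by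
      rw [hζ'def]
      intro h
      exact hζ0 (hρ (by rw [h, map_zero]))
    have hβ0 : β ≠ 0 := by
      intro h
      rw [h, aeval_def, ← eval_map, ← Polynomial.coeff_zero_eq_eval_zero,
        Polynomial.coeff_map] at hβ
      exact ha0 (by
        apply hρ
        rw [hβ, map_zero])
    have hmapP : ∀ j : ℕ, (P13 ζ n f j).map (algebraMap F E)
        = ∏ i ∈ Finset.range n, (X - C ((ζ' ^ j)⁻¹ * β ^ Fintype.card F ^ i)) := by
      intro j
      rw [P13, Polynomial.map_mul, map_C, map_inv₀, map_pow, Polynomial.map_comp, hfmap,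
        Polynomial.map_mul, map_C, Polynomial.map_X, map_pow]
      rw [Polynomial.prod_comp]
      have hfac : ∀ i ∈ Finset.range n,
          (X - C (β ^ Fintype.card F ^ i)).comp (C (ζ' ^ j) * X)
          = C (ζ' ^ j) * (X - C ((ζ' ^ j)⁻¹ * β ^ Fintype.card F ^ i)) := by
        intro i _
        rw [sub_comp, X_comp, C_comp, mul_sub, ← C_mul,
          mul_inv_cancel_left₀ (pow_ne_zero _ hζ'0)]
      rw [Finset.prod_congr rfl hfac, Finset.prod_mul_distrib, Finset.prod_const,
        Finset.card_range, ← C_pow, ← pow_mul, ← mul_assoc, ← C_mul,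
        inv_mul_cancel₀ (pow_ne_zero _ hζ'0), C_1, one_mul]
    have inner : ∀ γ : E, ∏ j ∈ Finset.Icc 1 k, (X - C ((ζ' ^ j)⁻¹ * γ))
        = X ^ k - C (γ ^ k) := by
      intro γ
      rw [X_pow_sub_C_eq_prod hζ' hk rfl]
      refine (Finset.prod_nbij' (fun i => k - i) (fun j => k - j) ?_ ?_ ?_ ?_ ?_).symm
      · intro i hi
        simp only [Finset.mem_range, Finset.mem_Icc] at *
        omega
      · intro j hj
        simp only [Finset.mem_range, Finset.mem_Icc] at *
        omega
      · intro i hi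
        simp only [Finset.mem_range, Finset.mem_Icc] at *
        omega
      · intro j hj
        simp only [Finset.mem_range, Finset.mem_Icc] at *
        omega
      · intro i hi
        rw [Finset.mem_range] at hi
        have hinv : (ζ' ^ (k - i))⁻¹ = ζ' ^ i := by
          refine inv_eq_of_mul_eq_one_right ?_
          rw [← pow_add, show k - i + i = k from by omega, hζ'.pow_eq_one]
        rw [hinv]
    have key2 : (∏ j ∈ Finset.Icc 1 k, P13 ζ n f j).map (algebraMap F E)
        = (χ.comp (X ^ k)).map (algebraMap F E) := by
      rw [Polynomial.map_prod]
      rw [Finset.prod_congr rfl fun j _ => hmapP j, Finset.prod_comm]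
      rw [Finset.prod_congr rfl fun i _ => inner _]
      rw [Polynomial.map_comp, hχ, Polynomial.map_pow, map_X, Polynomial.prod_comp]
      refine Finset.prod_congr rfl fun i _ => ?_
      rw [sub_comp, X_comp, C_comp]
      rw [← pow_mul, ← pow_mul, mul_comm]
    have key3 : χ.comp (X ^ k) = ∏ j ∈ Finset.Icc 1 k, P13 ζ n f j :=
      Polynomial.map_injective _ hρ key2.symm
    rw [key3, key1]
end

section
/- Let f ∈ Fq[X] be a monic polynomial of degree n such that gcd(n,q) = 1 and such that f(X) = g(X^t) for some polynomial g ∈ Fq[X] and some integer t > 1. Then for every a ∈ Fq with a ≠ 0, there do not exist an integer m > 1 and a polynomial h ∈ Fq[X] such that f(X + a) = h(X^m). -/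
/-!
If `m > 1`, the polynomial `h(X^m)` has zero coefficient of `X^(N-1)`, where `N` is its degree,
since `m` cannot divide both `N` and `N - 1`. Applied to `f = g(X^t)` this kills the coefficient
of `X^(n-1)` in `f`, so the coefficient of `X^(n-1)` in `f(X + a)` is `n · a · lc f`. It is
nonzero because the characteristic does not divide `n`, hence `f(X + a)` is not of the form `h(X^m)`.
-/

open Polynomial

theorem natCast_ne_zero_of_coprime {R : Type*} [NonAssocRing R] [Nontrivial R] {n q : ℕ}
    (hq : (q : R) = 0) (h : n.Coprime q) : (n : R) ≠ 0 := fun hn =>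
  CharP.ringChar_ne_one <| Nat.eq_one_of_dvd_one <|
    h ▸ Nat.dvd_gcd (ringChar.dvd hn) (ringChar.dvd hq)

namespace Polynomial

variable {R : Type*} [CommSemiring R]

theorem nextCoeff_expand_eq_zero {m : ℕ} (hm : 1 < m) (g : R[X]) :
    (expand R m g).nextCoeff = 0 := by
  rw [nextCoeff_eq_zero, natDegree_expand, or_iff_not_imp_left]
  intro hdeg
  refine ⟨Nat.pos_of_ne_zero hdeg, ?_⟩
  rw [coeff_expand (by omega), if_neg]
  intro hdvd
  have hone : m ∣ g.natDegree * m - (g.natDegree * m - 1) := Nat.dvd_sub (dvd_mul_left m _) hdvd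
  rw [Nat.sub_sub_self (Nat.one_le_iff_ne_zero.mpr hdeg), Nat.dvd_one] at hone
  omega

theorem hasseDeriv_natDegree_sub_one {f : R[X]} (hf : 0 < f.natDegree) :
    hasseDeriv (f.natDegree - 1) f =
      C (f.coeff (f.natDegree - 1)) + C ((f.natDegree : R) * f.leadingCoeff) * X := by
  ext k
  rw [hasseDeriv_coeff]
  rcases k with _ | _ | k
  · simp
  · rw [Nat.add_comm, Nat.sub_add_cancel hf, Nat.choose_symm hf]
    simp only [Nat.choose_one_right, coeff_add, coeff_C_succ, coeff_C_mul_X, zero_add]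
    rfl
  · rw [coeff_eq_zero_of_natDegree_lt (by omega)]
    simp

theorem nextCoeff_taylor (a : R) (f : R[X]) :
    (taylor a f).nextCoeff = f.nextCoeff + f.natDegree * f.leadingCoeff * a := by
  rcases Nat.eq_zero_or_pos f.natDegree with h0 | hpos
  · simp [nextCoeff, natDegree_taylor, h0]
  rw [nextCoeff_of_natDegree_pos (by rwa [natDegree_taylor]), natDegree_taylor, taylor_coeff,
    hasseDeriv_natDegree_sub_one hpos, nextCoeff_of_natDegree_pos hpos]
  simp

end Polynomial

theorem stmt15_general {F : Type*} [Field F] [Fintype F]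
    (f : F[X]) (n : ℕ) (hdeg : f.natDegree = n)
    (hgcd : Nat.gcd n (Fintype.card F) = 1)
    (t : ℕ) (ht : 1 < t) (g : F[X]) (hcomp : f = g.comp (X ^ t))
    (a : F) (ha : a ≠ 0) :
    ¬ ∃ m : ℕ, 1 < m ∧ ∃ h : F[X], f.comp (X + C a) = h.comp (X ^ m) := by
  rintro ⟨m, hm, h, hfh⟩
  have hn : (n : F) ≠ 0 := natCast_ne_zero_of_coprime (FiniteField.cast_card_eq_zero F) hgcd
  have hlead : f.leadingCoeff ≠ 0 := by
    rw [Ne, leadingCoeff_eq_zero]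
    rintro rfl
    exact hn (by rw [← hdeg, natDegree_zero, Nat.cast_zero])
  have hf : f.nextCoeff = 0 := by
    rw [hcomp, ← expand_eq_comp_X_pow]
    exact nextCoeff_expand_eq_zero ht g
  have hshift : (taylor a f).nextCoeff = 0 := by
    rw [taylor_apply, hfh, ← expand_eq_comp_X_pow]
    exact nextCoeff_expand_eq_zero hm h
  rw [nextCoeff_taylor, hf, zero_add, hdeg] at hshift
  exact mul_ne_zero (mul_ne_zero hn hlead) ha hshift

/-- Let `f ∈ F_q[X]` be monic of degree `n` with `gcd(n,q) = 1` and
`f(X) = g(X^t)` for some `g ∈ F_q[X]` and some `t > 1`. Then for every `a ∈ F_q`, `a ≠ 0`,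
there are no `m > 1` and `h ∈ F_q[X]` with `f(X + a) = h(X^m)`. -/
theorem stmt15 {F : Type*} [Field F] [Fintype F]
    (f : F[X]) (n : ℕ) (hmonic : f.Monic) (hdeg : f.natDegree = n)
    (hgcd : Nat.gcd n (Fintype.card F) = 1)
    (t : ℕ) (ht : 1 < t) (g : F[X]) (hcomp : f = g.comp (X ^ t))
    (a : F) (ha : a ≠ 0) :
    ¬ ∃ m : ℕ, 1 < m ∧ ∃ h : F[X], f.comp (X + C a) = h.comp (X ^ m) :=
  stmt15_general f n hdeg hgcd t ht g hcomp a ha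
end

section
/- Let k be a positive integer with gcd(q,k) = 1, let ζ_k be a primitive k-th root of unity in an extension field of Fq, let β be a nonzero proper element of F_{q^n}, and let m be the degree of the minimal polynomial of β^k over Fq. Then the elements ζ_k^{j} β^{q^{i}} for 1 ≤ j ≤ k and 0 ≤ i ≤ m − 1 are pairwise distinct. -/
/-!
Raising `ζ ^ j * β ^ q ^ i` to the `k`-th power kills the root of unity, so two equal elements
give `(β ^ k) ^ q ^ i = (β ^ k) ^ q ^ i'`. If `x ^ q ^ d = x`, then the `d`-th power of the
Frobenius of `F⟮x⟯` fixes the generator `x`, hence is trivial, so the degree of `x` (the order of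
that Frobenius) divides `d`; as the Frobenius is injective this forces `i = i'` for `i, i'`
below the degree of `β ^ k`. Cancelling `β ^ q ^ i` leaves `ζ ^ j = ζ ^ j'`, and the powers
`ζ ^ 1, …, ζ ^ k` are distinct.
-/

open Polynomial IntermediateField

namespace IsPrimitiveRoot

theorem injOn_pow_Icc {M : Type*} [CommMonoid M] {ζ : M} {k : ℕ} (hζ : IsPrimitiveRoot ζ k) :
    Set.InjOn (ζ ^ ·) (Set.Icc 1 k) := by
  intro j hj j' hj' h
  simp only [Set.mem_Icc] at hj hj'
  wlog hle : j ≤ j' generalizing j j'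
  · exact (this h.symm hj' hj (le_of_not_ge hle)).symm
  obtain rfl | hlt := hle.eq_or_lt
  · rfl
  have hdiff : ζ ^ (j' - j) = 1 := by
    apply ((hζ.isUnit (by omega)).pow j).mul_left_cancel
    simp only at h
    rw [← pow_add, Nat.add_sub_cancel' hle, mul_one, h]
  have := Nat.le_of_dvd (by omega) (hζ.dvd_of_pow_eq_one _ hdiff)
  omega

end IsPrimitiveRoot

namespace FiniteField

variable {F E : Type*} [Field F] [Fintype F] [Field E] [Algebra F E]

theorem pow_card_pow_injective (i : ℕ) :
    Function.Injective fun x : E => x ^ Fintype.card F ^ i := by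
  rw [← pow_iterate]
  exact (frobeniusAlgHom F E).injective.iterate i

theorem natDegree_minpoly_dvd_of_pow_card_pow_eq_self {x : E} (hx : IsIntegral F x) {d : ℕ}
    (h : x ^ Fintype.card F ^ d = x) : (minpoly F x).natDegree ∣ d := by
  have : FiniteDimensional F F⟮x⟯ := adjoin.finiteDimensional hx
  have : Finite F⟮x⟯ := Module.finite_of_finite F
  rw [← adjoin.finrank hx, ← orderOf_frobeniusAlgHom, orderOf_dvd_iff_pow_eq_one]
  refine adjoin_algHom_ext F fun y hy => ?_
  obtain rfl := hy
  apply Subtype.ext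
  simp [AlgHom.coe_pow, coe_frobeniusAlgHom, pow_iterate, h]

theorem pow_card_pow_injOn_Iio_natDegree_minpoly (x : E) :
    Set.InjOn (fun i => x ^ Fintype.card F ^ i) (Set.Iio (minpoly F x).natDegree) := by
  intro i hi i' hi' h
  simp only [Set.mem_Iio] at hi hi'
  have hx : IsIntegral F x := by
    by_contra hx
    simp [minpoly.eq_zero hx] at hi
  wlog hle : i ≤ i' generalizing i i'
  · exact (this h.symm hi' hi (le_of_not_ge hle)).symm
  obtain rfl | hlt := hle.eq_or_lt
  · rfl
  have hfix : x ^ Fintype.card F ^ (i' - i) = x := by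
    apply pow_card_pow_injective (F := F) i
    simp only at h ⊢
    rw [← pow_mul, ← pow_add, Nat.sub_add_cancel hle, h]
  have := Nat.le_of_dvd (by omega) (natDegree_minpoly_dvd_of_pow_card_pow_eq_self hx hfix)
  omega

end FiniteField

theorem stmt16_general {F E : Type*} [Field F] [Fintype F] [Field E] [Algebra F E]
    (β : E) (hβ0 : β ≠ 0)
    (k : ℕ)
    (ζ : E) (hζ : IsPrimitiveRoot ζ k)
    (m : ℕ) (hm : m = (minpoly F (β ^ k)).natDegree) :
    ∀ j i j' i' : ℕ, 1 ≤ j → j ≤ k → 1 ≤ j' → j' ≤ k → i ≤ m - 1 → i' ≤ m - 1 →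
      ζ ^ j * β ^ Fintype.card F ^ i = ζ ^ j' * β ^ Fintype.card F ^ i' →
      j = j' ∧ i = i' := by
  intro j i j' i' hj1 hjk hj'1 hj'k hi hi' heq
  have hkill : ∀ (l : ℕ) (y : E), (ζ ^ l * y) ^ k = y ^ k := fun l y => by
    rw [mul_pow, ← pow_mul, pow_mul', hζ.pow_eq_one, one_pow, one_mul]
  have hpow : (β ^ k) ^ Fintype.card F ^ i = (β ^ k) ^ Fintype.card F ^ i' := by
    rw [pow_right_comm β k, pow_right_comm β k, ← hkill j (β ^ _ ^ i), heq, hkill]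
  subst hm
  obtain rfl : i = i' := by
    -- a transcendental `β ^ k` has `m = 0`, and then `m - 1 = 0` forces `i = i' = 0`
    rcases Nat.eq_zero_or_pos (minpoly F (β ^ k)).natDegree with hm0 | hmpos
    · omega
    · exact FiniteField.pow_card_pow_injOn_Iio_natDegree_minpoly (β ^ k)
        (Set.mem_Iio.mpr (by omega)) (Set.mem_Iio.mpr (by omega)) hpow
  have hζpow : ζ ^ j = ζ ^ j' := mul_right_cancel₀ (pow_ne_zero _ hβ0) heq
  exact ⟨hζ.injOn_pow_Icc ⟨hj1, hjk⟩ ⟨hj'1, hj'k⟩ hζpow, rfl⟩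

/-- Let `k ≥ 1` with `gcd(q,k) = 1`, `ζ_k` a primitive `k`-th root of
unity in an extension field of `F_q`, `β` a nonzero proper element of `F_{q^n}`, and `m` the
degree of the minimal polynomial of `β^k` over `F_q`. Then the elements `ζ_k^j β^{q^i}` for
`1 ≤ j ≤ k` and `0 ≤ i ≤ m − 1` are pairwise distinct. -/
theorem stmt16 {F E : Type*} [Field F] [Fintype F] [Field E] [Algebra F E]
    (n : ℕ) (hn : 0 < n)
    (β : E) (hβ0 : β ≠ 0) (hproper : (minpoly F β).natDegree = n)
    (k : ℕ) (hk : 0 < k) (hgcd : Nat.gcd (Fintype.card F) k = 1)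
    (ζ : E) (hζ : IsPrimitiveRoot ζ k)
    (m : ℕ) (hm : m = (minpoly F (β ^ k)).natDegree) :
    ∀ j i j' i' : ℕ, 1 ≤ j → j ≤ k → 1 ≤ j' → j' ≤ k → i ≤ m - 1 → i' ≤ m - 1 →
      ζ ^ j * β ^ Fintype.card F ^ i = ζ ^ j' * β ^ Fintype.card F ^ i' →
      j = j' ∧ i = i' :=
  stmt16_general β hβ0 k ζ hζ m hm
end

section
/- Let k be a prime dividing q − 1, let β be a nonzero proper element of F_{q^n}, and suppose the multiplicative order of β is e = k^v · r with gcd(k,r) = 1. Then: (i) for every i ≥ 0, the order of the minimal polynomial m_{β^{k^i}} of β^{k^i} over Fq equals k^{max(v−i,0)} · r; (ii) the minimal polynomials m_{β^{k^0}}, m_{β^{k^1}}, …, m_{β^{k^{v−1}}} are pairwise distinct and each is distinct from every m_{β^{k^i}} with i ≥ v; and (iii) m_{β^{k^v}} = m_{β^{k^{v + ord_r(k)}}}, where ord_r(k) is the multiplicative order of k modulo r. -/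
/-!
A root `x` of its minimal polynomial `m` satisfies `x ^ e = 1` exactly when `m ∣ X ^ e - 1`, so
the order of `m` is the multiplicative order of `x`. Everything then reduces to the orders of the
powers `β ^ k ^ i` when `orderOf β = k ^ v * r`: each power of `k` divides out one factor `k` until
`k ^ v` is gone, after which raising to a power of `k`, which is prime to `r`, preserves the order.
Because `β` lies in a finite field, `r ≠ 0`, so the orders `k ^ (v - i) * r` for `i < v` differ from
each other and from `r`, and different orders force different minimal polynomials. Finally
`k ^ ord_r(k) ≡ 1 [MOD r]`, so `β ^ k ^ v`, of order `r`, is fixed by raising to `k ^ ord_r(k)`.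
-/

open Polynomial

theorem polyOrder_minpoly {F E : Type*} [Field F] [Ring E] [Algebra F E] (x : E) :
    polyOrder (minpoly F x) = orderOf x := by
  rw [orderOf, Function.minimalPeriod_eq_sInf_n_pos_IsPeriodicPt, polyOrder]
  congr! 3 with e
  simp [minpoly.dvd_iff, isPeriodicPt_mul_iff_pow_eq_one, sub_eq_zero]

section PowPow

variable {M : Type*} [Monoid M] {x : M} {k v r : ℕ}

theorem orderOf_pow_pow_of_le (hk : 0 < k) (hx : orderOf x = k ^ v * r) {i : ℕ} (hi : i ≤ v) :
    orderOf (x ^ k ^ i) = k ^ (v - i) * r := by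
  have hdvd : k ^ i ∣ orderOf x := hx ▸ dvd_mul_of_dvd_left (pow_dvd_pow k hi) r
  rw [orderOf_pow_of_dvd (pow_ne_zero _ hk.ne') hdvd, hx, ← Nat.pow_div hi hk,
    Nat.div_mul_right_comm (pow_dvd_pow k hi)]

theorem orderOf_pow_pow_of_coprime (hk : 0 < k) (hkr : k.Coprime r)
    (hx : orderOf x = k ^ v * r) (i : ℕ) : orderOf (x ^ k ^ i) = k ^ (v - i) * r := by
  rcases le_total i v with hi | hi
  · exact orderOf_pow_pow_of_le hk hx hi
  · obtain ⟨j, rfl⟩ := exists_add_of_le hi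
    have hv : orderOf (x ^ k ^ v) = r := by simpa using orderOf_pow_pow_of_le hk hx le_rfl
    rw [pow_add, pow_mul, Nat.Coprime.orderOf_pow (hv ▸ (hkr.pow_left j).symm), hv,
      Nat.sub_eq_zero_of_le hi, pow_zero, one_mul]

theorem pow_pow_orderOf_natCast_eq_self (x : M) (k : ℕ) :
    x ^ k ^ orderOf (k : ZMod (orderOf x)) = x := by
  have hmod : k ^ orderOf (k : ZMod (orderOf x)) ≡ 1 [MOD orderOf x] :=
    (ZMod.natCast_eq_natCast_iff _ _ _).mp (by push_cast; exact pow_orderOf_eq_one _)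
  rw [← pow_mod_orderOf, hmod, pow_mod_orderOf, pow_one]

end PowPow

theorem minpoly_pow_pow_ne {F E : Type*} [Field F] [Ring E] [Algebra F E] {x : E} {k v r : ℕ}
    (hk : 1 < k) (hr : r ≠ 0) (hkr : k.Coprime r) (hx : orderOf x = k ^ v * r) {i j : ℕ}
    (hi : i < v) (hij : i ≠ j) : minpoly F (x ^ k ^ i) ≠ minpoly F (x ^ k ^ j) := by
  intro h
  have horder := congrArg polyOrder h
  rw [polyOrder_minpoly, polyOrder_minpoly, orderOf_pow_pow_of_coprime (by omega) hkr hx,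
    orderOf_pow_pow_of_coprime (by omega) hkr hx] at horder
  have := Nat.pow_right_injective hk (Nat.eq_of_mul_eq_mul_right (Nat.pos_of_ne_zero hr) horder)
  omega

theorem stmt17_general {F E : Type*} [Field F] [Fintype F] [Field E] [Algebra F E]
    (n : ℕ) (hn : 0 < n) (hrank : Module.finrank F E = n)
    (β : E) (hβ0 : β ≠ 0)
    (k : ℕ) (hkprime : Nat.Prime k)
    (v r : ℕ) (he : orderOf β = k ^ v * r) (hgcd : Nat.gcd k r = 1) :
    (∀ i : ℕ, polyOrder (minpoly F (β ^ k ^ i)) = k ^ (v - i) * r) ∧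
    (∀ i j : ℕ, i < v → j < v → i ≠ j →
        minpoly F (β ^ k ^ i) ≠ minpoly F (β ^ k ^ j)) ∧
    (∀ i j : ℕ, i < v → v ≤ j →
        minpoly F (β ^ k ^ i) ≠ minpoly F (β ^ k ^ j)) ∧
    minpoly F (β ^ k ^ v) = minpoly F (β ^ k ^ (v + orderOf (k : ZMod r))) := by
  have : Module.Finite F E := Module.finite_of_finrank_pos (hrank ▸ hn)
  have : Finite E := Module.finite_of_finite F
  have hr : r ≠ 0 := right_ne_zero_of_mul (he ▸ orderOf_eq_zero_iff_eq_zero.not.mpr hβ0)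
  have hord := orderOf_pow_pow_of_coprime hkprime.pos hgcd he
  have hv : orderOf (β ^ k ^ v) = r := by simpa using hord v
  refine ⟨fun i ↦ (polyOrder_minpoly _).trans (hord i),
    fun i j hi _ hij ↦ minpoly_pow_pow_ne hkprime.one_lt hr hgcd he hi hij,
    fun i j hi hj ↦ minpoly_pow_pow_ne hkprime.one_lt hr hgcd he hi (by omega), ?_⟩
  rw [pow_add, pow_mul, ← hv, pow_pow_orderOf_natCast_eq_self]

/-- Let `k` be a prime dividing `q − 1`, `β` a nonzero proper element of
`F_{q^n}` of multiplicative order `e = k^v · r` with `gcd(k,r) = 1`. Then: (i) for every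
`i ≥ 0` the order of `m_{β^{k^i}}` equals `k^{max(v−i,0)} · r`; (ii) the minimal polynomials
`m_{β^{k^0}}, …, m_{β^{k^{v−1}}}` are pairwise distinct and each is distinct from every
`m_{β^{k^i}}` with `i ≥ v`; (iii) `m_{β^{k^v}} = m_{β^{k^{v + ord_r(k)}}}`. -/
theorem stmt17 {F E : Type*} [Field F] [Fintype F] [Field E] [Algebra F E]
    (n : ℕ) (hn : 0 < n) (hrank : Module.finrank F E = n)
    (β : E) (hβ0 : β ≠ 0) (hproper : (minpoly F β).natDegree = n)
    (k : ℕ) (hkprime : Nat.Prime k) (hkq : k ∣ Fintype.card F - 1)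
    (v r : ℕ) (he : orderOf β = k ^ v * r) (hgcd : Nat.gcd k r = 1) :
    (∀ i : ℕ, polyOrder (minpoly F (β ^ k ^ i)) = k ^ (v - i) * r) ∧
    (∀ i j : ℕ, i < v → j < v → i ≠ j →
        minpoly F (β ^ k ^ i) ≠ minpoly F (β ^ k ^ j)) ∧
    (∀ i j : ℕ, i < v → v ≤ j →
        minpoly F (β ^ k ^ i) ≠ minpoly F (β ^ k ^ j)) ∧
    minpoly F (β ^ k ^ v) = minpoly F (β ^ k ^ (v + orderOf (k : ZMod r))) :=
  stmt17_general n hn hrank β hβ0 k hkprime v r he hgcd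
end

section
/- Let k be a prime dividing q − 1, let β be a nonzero proper element of F_{q^n} of multiplicative order e = k^v · r with gcd(k,r) = 1, and let s be the smallest positive integer such that k^s ≡ q^j (mod r) for some integer j with 0 ≤ j ≤ deg(m_{β^{k^v}}) − 1. Then the minimal polynomials m_{β^{k^{v}}}, m_{β^{k^{v+1}}}, …, m_{β^{k^{v+s−1}}} are pairwise distinct, m_{β^{k^{v+s}}} = m_{β^{k^{v}}}, and s = ord_r(k)/d, where d is the multiplicative order of q^j modulo r; moreover d divides deg(m_{β^{k^v}}). -/
open Polynomial

section Aux

variable (F E : Type*) [Field F] [Fintype F] [Field E] [Algebra F E]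

/-- The `q`-power Frobenius as an `F`-algebra endomorphism of `E`. -/
lemma exists_frobAlg : ∃ φ : E →ₐ[F] E, ∀ z, φ z = z ^ Fintype.card F := by
  obtain ⟨p, hchar⟩ := CharP.exists F
  haveI : CharP F p := hchar
  haveI : CharP E p := charP_of_injective_algebraMap (algebraMap F E).injective p
  obtain ⟨f, hp, hcard⟩ := FiniteField.card F p
  haveI : Fact p.Prime := ⟨hp⟩
  refine ⟨{ toRingHom := iterateFrobenius E p (f : ℕ),
            commutes' := fun a => ?_ }, fun z => ?_⟩
  · show iterateFrobenius E p (f : ℕ) (algebraMap F E a) = algebraMap F E a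
    rw [iterateFrobenius_def, ← map_pow, ← hcard, FiniteField.pow_card]
  · show iterateFrobenius E p (f : ℕ) z = z ^ Fintype.card F
    rw [iterateFrobenius_def, hcard]

variable {F E}

lemma minpoly_pow_card_pow (x : E) (t : ℕ) :
    minpoly F (x ^ Fintype.card F ^ t) = minpoly F x := by
  obtain ⟨φ, hφ⟩ := exists_frobAlg F E
  induction t with
  | zero => simp
  | succ t ih =>
    have h : x ^ Fintype.card F ^ (t + 1) = φ (x ^ Fintype.card F ^ t) := by
      rw [hφ, ← pow_mul, ← pow_succ]
    rw [h, minpoly.algHom_eq φ (RingHom.injective (φ : E →+* E)), ih]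

lemma alg_fixed (z : E) (hz : z ^ Fintype.card F = z) : ∃ a : F, algebraMap F E a = z := by
  have hq1 : 1 < Fintype.card F := Fintype.one_lt_card
  have hsplit : (X ^ Fintype.card F - X : F[X]).Splits := by
    rw [splits_iff_card_roots, FiniteField.roots_X_pow_card_sub_X,
      FiniteField.X_pow_card_sub_X_natDegree_eq F hq1]
    simp
  have hne : (X ^ Fintype.card F - X : F[X]).map (algebraMap F E) ≠ 0 :=
    (Polynomial.map_ne_zero_iff (algebraMap F E).injective).2
      (FiniteField.X_pow_card_sub_X_ne_zero F hq1)
  have hroot : z ∈ ((X ^ Fintype.card F - X : F[X]).map (algebraMap F E)).roots := by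
    rw [mem_roots hne]
    show Polynomial.eval z _ = 0
    simp [hz]
  rw [hsplit.roots_map] at hroot
  obtain ⟨a, _, rfl⟩ := Multiset.mem_map.1 hroot
  exact ⟨a, rfl⟩

lemma core [FiniteDimensional F E] (x : E) (hx : x ≠ 0) (r : ℕ) (hxr : orderOf x = r)
    (hr : 0 < r) (N : ℕ) (hN : 0 < N) (hone : Fintype.card F ^ N ≡ 1 [MOD r]) :
    (minpoly F x).natDegree = orderOf ((Fintype.card F : ZMod r)) ∧
    ∀ y : E, (Polynomial.aeval y) (minpoly F x) = 0 ↔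
      ∃ t, y = x ^ Fintype.card F ^ t := by
  classical
  haveI : NeZero r := ⟨hr.ne'⟩
  set m := orderOf ((Fintype.card F : ZMod r)) with hmdef
  have hq0 : 0 < Fintype.card F := Fintype.card_pos
  have hw1 : ((Fintype.card F : ZMod r)) ^ N = 1 := by
    have h := (ZMod.natCast_eq_natCast_iff _ _ _).2 hone
    push_cast at h
    exact h
  have hfin : IsOfFinOrder ((Fintype.card F : ZMod r)) :=
    isOfFinOrder_iff_pow_eq_one.2 ⟨N, hN, hw1⟩
  have hm : 0 < m := orderOf_pos_iff.2 hfin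
  have hqm : Fintype.card F ^ m ≡ 1 [MOD r] := by
    rw [← ZMod.natCast_eq_natCast_iff]
    push_cast
    exact pow_orderOf_eq_one _
  -- unit version of x
  set xu : Eˣ := Units.mk0 x hx with hxu
  have hxur : orderOf xu = r := by
    rw [← hxr, ← orderOf_units]; rfl
  have hpow : ∀ a b : ℕ, x ^ a = x ^ b ↔ a ≡ b [MOD r] := by
    intro a b
    rw [← hxur, ← pow_eq_pow_iff_modEq]
    constructor
    · intro h; exact Units.ext (by simpa [hxu] using h)
    · intro h; simpa [hxu] using congrArg Units.val h
  have hfix : x ^ Fintype.card F ^ m = x := by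
    have h := (hpow (Fintype.card F ^ m) 1).2 (by simpa using hqm)
    simpa using h
  -- coprimality of q and r
  have hcop : Nat.Coprime (Fintype.card F) r :=
    (ZMod.isUnit_iff_coprime _ _).1 hfin.isUnit
  set W : (ZMod r)ˣ := ZMod.unitOfCoprime _ hcop with hW
  have hWm : orderOf W = m := by
    rw [← orderOf_units, ZMod.coe_unitOfCoprime]
  -- injectivity of t ↦ x ^ q ^ t on range m
  have hinj : Set.InjOn (fun t => x ^ Fintype.card F ^ t) ↑(Finset.range m) := by
    intro a ha b hb hab
    have h1 : Fintype.card F ^ a ≡ Fintype.card F ^ b [MOD r] := (hpow _ _).1 hab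
    have h2' : ((Fintype.card F : ZMod r)) ^ a = ((Fintype.card F : ZMod r)) ^ b := by
      have h := (ZMod.natCast_eq_natCast_iff _ _ _).2 h1
      push_cast at h
      exact h
    have h2 : W ^ a = W ^ b := Units.ext (by simpa [ZMod.coe_unitOfCoprime, hW] using h2')
    have ha' : a < orderOf W := by
      rw [hWm]; simpa using ha
    have hb' : b < orderOf W := by
      rw [hWm]; simpa using hb
    exact pow_injOn_Iio_orderOf ha' hb' h2
  -- the candidate minimal polynomial over E
  set P : E[X] := ∏ t ∈ Finset.range m, (X - C (x ^ Fintype.card F ^ t)) with hP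
  have hPmonic : P.Monic := monic_prod_of_monic _ _ fun i _ => monic_X_sub_C _
  have hPdeg : P.natDegree = m := by
    rw [hP, natDegree_prod_of_monic _ _ fun i _ => monic_X_sub_C _,
      Finset.sum_congr rfl (fun t _ => natDegree_X_sub_C (x ^ Fintype.card F ^ t))]
    simp
  obtain ⟨φ, hφ⟩ := exists_frobAlg F E
  have hg : (X - C (x ^ Fintype.card F ^ m) : E[X]) = X - C (x ^ Fintype.card F ^ 0) := by
    rw [hfix, pow_zero, pow_one]
  have hmapP : P.map (φ : E →+* E) = P := by
    have h1 : P.map (φ : E →+* E)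
        = ∏ t ∈ Finset.range m, (X - C (x ^ Fintype.card F ^ (t + 1))) := by
      rw [hP, Polynomial.map_prod]
      refine Finset.prod_congr rfl fun t _ => ?_
      rw [Polynomial.map_sub, Polynomial.map_X, Polynomial.map_C]
      show (X : E[X]) - C (φ (x ^ Fintype.card F ^ t)) = _
      rw [hφ, ← pow_mul, ← pow_succ]
    have h2 : (∏ t ∈ Finset.range m, (X - C (x ^ Fintype.card F ^ (t + 1))))
        * (X - C (x ^ Fintype.card F ^ 0))
        = (∏ t ∈ Finset.range m, (X - C (x ^ Fintype.card F ^ t)))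
        * (X - C (x ^ Fintype.card F ^ 0)) := by
      calc (∏ t ∈ Finset.range m, (X - C (x ^ Fintype.card F ^ (t + 1))))
            * (X - C (x ^ Fintype.card F ^ 0))
          = ∏ t ∈ Finset.range (m + 1), (X - C (x ^ Fintype.card F ^ t)) :=
            (Finset.prod_range_succ' (fun t => X - C (x ^ Fintype.card F ^ t)) m).symm
        _ = (∏ t ∈ Finset.range m, (X - C (x ^ Fintype.card F ^ t)))
            * (X - C (x ^ Fintype.card F ^ m)) :=
            Finset.prod_range_succ (fun t => X - C (x ^ Fintype.card F ^ t)) m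
        _ = _ := by rw [hg]
    rw [h1, hP]
    exact mul_right_cancel₀ (X_sub_C_ne_zero _) h2
  have hcoef : ∀ i, ∃ a : F, algebraMap F E a = P.coeff i := by
    intro i
    apply alg_fixed
    have h := congrArg (fun p => Polynomial.coeff p i) hmapP
    simpa [Polynomial.coeff_map, hφ] using h
  have hlift : P ∈ Polynomial.lifts (algebraMap F E) := by
    rw [Polynomial.lifts_iff_coeff_lifts]
    intro i
    exact hcoef i
  obtain ⟨P₀, hP₀map, hP₀deg, hP₀monic⟩ :=
    Polynomial.lifts_and_degree_eq_and_monic hlift hPmonic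
  have hevalP : ∀ y : E, (P.eval y = 0 ↔ ∃ t < m, y = x ^ Fintype.card F ^ t) := by
    intro y
    rw [hP, Polynomial.eval_prod, Finset.prod_eq_zero_iff]
    constructor
    · rintro ⟨t, ht, h0⟩
      rw [eval_sub, eval_X, eval_C, sub_eq_zero] at h0
      exact ⟨t, Finset.mem_range.1 ht, h0⟩
    · rintro ⟨t, ht, rfl⟩
      exact ⟨t, Finset.mem_range.2 ht, by rw [eval_sub, eval_X, eval_C, sub_self]⟩
  have hxP : P.eval x = 0 := (hevalP x).2 ⟨0, hm, by rw [pow_zero, pow_one]⟩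
  have hintx : IsIntegral F x := Algebra.IsIntegral.isIntegral x
  have haevalP₀ : (Polynomial.aeval x) P₀ = 0 := by
    rw [Polynomial.aeval_def, ← Polynomial.eval_map, hP₀map]
    exact hxP
  have hdvd : minpoly F x ∣ P₀ := minpoly.dvd F x haevalP₀
  have hP₀deg' : P₀.natDegree = m := by
    have h := natDegree_eq_of_degree_eq hP₀deg
    rw [h, hPdeg]
  have hP₀ne : P₀ ≠ 0 := hP₀monic.ne_zero
  have hle : (minpoly F x).natDegree ≤ m :=
    hP₀deg' ▸ Polynomial.natDegree_le_of_dvd hdvd hP₀ne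
  set M := (minpoly F x).map (algebraMap F E) with hM
  have hMne : M ≠ 0 :=
    (Polynomial.map_ne_zero_iff (algebraMap F E).injective).2 (minpoly.ne_zero hintx)
  have hroots : ∀ t, (x ^ Fintype.card F ^ t) ∈ M.roots := by
    intro t
    rw [mem_roots hMne]
    show Polynomial.eval _ M = 0
    rw [hM, Polynomial.eval_map, ← Polynomial.aeval_def, ← minpoly_pow_card_pow x t]
    exact minpoly.aeval F _
  have hge : m ≤ (minpoly F x).natDegree := by
    have hsub : (Finset.range m).image (fun t => x ^ Fintype.card F ^ t) ⊆ M.roots.toFinset := by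
      intro y hy
      obtain ⟨t, ht, rfl⟩ := Finset.mem_image.1 hy
      exact Multiset.mem_toFinset.2 (hroots t)
    have hcard : ((Finset.range m).image (fun t => x ^ Fintype.card F ^ t)).card = m := by
      rw [Finset.card_image_of_injOn hinj, Finset.card_range]
    calc m = ((Finset.range m).image (fun t => x ^ Fintype.card F ^ t)).card := hcard.symm
      _ ≤ M.roots.toFinset.card := Finset.card_le_card hsub
      _ ≤ Multiset.card M.roots := M.roots.toFinset_card_le
      _ ≤ M.natDegree := Polynomial.card_roots' M
      _ = (minpoly F x).natDegree :=
          Polynomial.natDegree_map_eq_of_injective (algebraMap F E).injective _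
  have hdeg : (minpoly F x).natDegree = m := le_antisymm hle hge
  have hminP₀ : P₀ = minpoly F x :=
    Polynomial.eq_of_monic_of_dvd_of_natDegree_le (minpoly.monic hintx) hP₀monic hdvd
      (by rw [hdeg, hP₀deg'])
  have hMP : M = P := by
    rw [hM, ← hminP₀, hP₀map]
  refine ⟨hdeg, fun y => ?_⟩
  constructor
  · intro hy
    have h : P.eval y = 0 := by
      rw [← hMP, hM, Polynomial.eval_map, ← Polynomial.aeval_def]
      exact hy
    obtain ⟨t, _, rfl⟩ := (hevalP y).1 h
    exact ⟨t, rfl⟩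
  · rintro ⟨t, rfl⟩
    rw [← minpoly_pow_card_pow x t]
    exact minpoly.aeval F _

end Aux

/-- Let `k` be a prime dividing `q − 1`, `β` a nonzero proper element of
`F_{q^n}` of multiplicative order `e = k^v · r` with `gcd(k,r) = 1`, and let `s` be the
smallest positive integer such that `k^s ≡ q^j (mod r)` for some `0 ≤ j ≤ deg(m_{β^{k^v}}) − 1`.
Then `m_{β^{k^v}}, m_{β^{k^{v+1}}}, …, m_{β^{k^{v+s−1}}}` are pairwise distinct,
`m_{β^{k^{v+s}}} = m_{β^{k^v}}`, and `s = ord_r(k)/d` where `d` is the multiplicative order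
of `q^j` modulo `r`; moreover `d` divides `deg(m_{β^{k^v}})`. -/
theorem stmt18 {F E : Type*} [Field F] [Fintype F] [Field E] [Algebra F E]
    (n : ℕ) (hn : 0 < n) (hrank : Module.finrank F E = n)
    (β : E) (hβ0 : β ≠ 0) (hproper : (minpoly F β).natDegree = n)
    (k : ℕ) (hkprime : Nat.Prime k) (hkq : k ∣ Fintype.card F - 1)
    (v r : ℕ) (he : orderOf β = k ^ v * r) (hgcd : Nat.gcd k r = 1)
    (s : ℕ)
    (hs : IsLeast {s' : ℕ | 0 < s' ∧ ∃ j < (minpoly F (β ^ k ^ v)).natDegree,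
            k ^ s' ≡ Fintype.card F ^ j [MOD r]} s) :
    (∀ i i' : ℕ, i < s → i' < s → i ≠ i' →
        minpoly F (β ^ k ^ (v + i)) ≠ minpoly F (β ^ k ^ (v + i'))) ∧
    minpoly F (β ^ k ^ (v + s)) = minpoly F (β ^ k ^ v) ∧
    ∃ j < (minpoly F (β ^ k ^ v)).natDegree,
      k ^ s ≡ Fintype.card F ^ j [MOD r] ∧
      s = orderOf (k : ZMod r) / orderOf ((Fintype.card F : ZMod r) ^ j) ∧
      orderOf ((Fintype.card F : ZMod r) ^ j) ∣ (minpoly F (β ^ k ^ v)).natDegree := by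
  classical
  haveI : FiniteDimensional F E := FiniteDimensional.of_finrank_pos (by rw [hrank]; exact hn)
  haveI : Finite E := Module.finite_of_finite F
  haveI : Fintype E := Fintype.ofFinite E
  set bu : Eˣ := Units.mk0 β hβ0 with hbu
  have horderβ : orderOf bu = k ^ v * r := by
    rw [← orderOf_units]
    exact he
  have hk0 : 0 < k := hkprime.pos
  have hr : 0 < r := by
    rcases Nat.eq_zero_or_pos r with h | h
    · have hpos := orderOf_pos bu
      rw [horderβ, h, mul_zero] at hpos
      exact absurd hpos (lt_irrefl 0)
    · exact h
  haveI : NeZero r := ⟨hr.ne'⟩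
  -- order of the powers of β
  have horder : ∀ i : ℕ, orderOf (β ^ k ^ (v + i)) = r := by
    intro i
    have h1 : β ^ k ^ (v + i) = ((bu ^ k ^ (v + i) : Eˣ) : E) := by simp [hbu]
    have hkcop : Nat.gcd r (k ^ i) = 1 := (Nat.Coprime.pow_left i hgcd).symm
    rw [h1, orderOf_units, orderOf_pow' _ (pow_ne_zero _ hk0.ne'), horderβ, pow_add,
      Nat.gcd_mul_left, hkcop, mul_one, Nat.mul_div_cancel_left _ (pow_pos hk0 v)]
  have hγ0 : β ^ k ^ v ≠ 0 := pow_ne_zero _ hβ0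
  have horderγ : orderOf (β ^ k ^ v) = r := by
    have h := horder 0
    rwa [add_zero] at h
  -- q ^ n ≡ 1 mod r
  have hcardE : Fintype.card E = Fintype.card F ^ n := by
    rw [Module.card_eq_pow_finrank (K := F) (V := E), hrank]
  have hdvd1 : r ∣ Fintype.card F ^ n - 1 := by
    have h1 : orderOf bu ∣ Fintype.card Eˣ := orderOf_dvd_card
    rw [Fintype.card_units, hcardE, horderβ] at h1
    exact dvd_trans (Dvd.intro_left _ rfl) h1
  have hone : Fintype.card F ^ n ≡ 1 [MOD r] :=
    ((Nat.modEq_iff_dvd' (Nat.one_le_pow _ _ Fintype.card_pos)).2 hdvd1).symm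
  obtain ⟨hdegγ, hrootγ⟩ := core (β ^ k ^ v) hγ0 r horderγ hr n hn hone
  set m := orderOf ((Fintype.card F : ZMod r)) with hmdef
  have hintγ : IsIntegral F (β ^ k ^ v) := Algebra.IsIntegral.isIntegral _
  have hm : 0 < m := hdegγ ▸ minpoly.natDegree_pos hintγ
  have hqm : Fintype.card F ^ m ≡ 1 [MOD r] := by
    rw [← ZMod.natCast_eq_natCast_iff]
    push_cast
    exact pow_orderOf_eq_one _
  have hred : ∀ t : ℕ, Fintype.card F ^ t ≡ Fintype.card F ^ (t % m) [MOD r] := by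
    intro t
    conv_lhs => rw [← Nat.div_add_mod t m]
    calc Fintype.card F ^ (m * (t / m) + t % m)
        = (Fintype.card F ^ m) ^ (t / m) * Fintype.card F ^ (t % m) := by
          rw [pow_add, pow_mul]
      _ ≡ 1 ^ (t / m) * Fintype.card F ^ (t % m) [MOD r] :=
          Nat.ModEq.mul_right _ (hqm.pow _)
      _ = Fintype.card F ^ (t % m) := by rw [one_pow, one_mul]
  -- powers of γ and congruences
  set gu : Eˣ := Units.mk0 (β ^ k ^ v) hγ0 with hgu
  have hgur : orderOf gu = r := by
    rw [← horderγ, ← orderOf_units]; rfl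
  have hpowγ : ∀ a b : ℕ, (β ^ k ^ v) ^ a = (β ^ k ^ v) ^ b ↔ a ≡ b [MOD r] := by
    intro a b
    rw [← hgur, ← pow_eq_pow_iff_modEq]
    constructor
    · intro h; exact Units.ext (by simpa [hgu] using h)
    · intro h; simpa [hgu] using congrArg Units.val h
  have hβpow : ∀ i : ℕ, β ^ k ^ (v + i) = (β ^ k ^ v) ^ k ^ i := by
    intro i
    rw [← pow_mul, ← pow_add]
  -- membership in the defining set of s
  have hmem : ∀ a : ℕ, 0 < a → (∃ t, k ^ a ≡ Fintype.card F ^ t [MOD r]) → s ≤ a := by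
    rintro a ha ⟨t, ht⟩
    refine hs.2 ⟨ha, t % m, ?_, ht.trans (hred t)⟩
    rw [hdegγ]
    exact Nat.mod_lt _ hm
  -- conjugacy extraction
  have hconj : ∀ i i' : ℕ, minpoly F (β ^ k ^ (v + i)) = minpoly F (β ^ k ^ (v + i')) →
      ∃ t, k ^ i' ≡ k ^ i * Fintype.card F ^ t [MOD r] := by
    intro i i' hmin
    have hx : (β ^ k ^ (v + i)) ≠ 0 := pow_ne_zero _ hβ0
    obtain ⟨_, hroot_i⟩ := core (β ^ k ^ (v + i)) hx r (horder i) hr n hn hone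
    have haev : (Polynomial.aeval (β ^ k ^ (v + i'))) (minpoly F (β ^ k ^ (v + i))) = 0 := by
      rw [hmin]
      exact minpoly.aeval F _
    obtain ⟨t, ht⟩ := (hroot_i _).1 haev
    have h2 : (β ^ k ^ v) ^ k ^ i' = (β ^ k ^ v) ^ (k ^ i * Fintype.card F ^ t) := by
      rw [← hβpow i', ht, hβpow i, ← pow_mul]
    exact ⟨t, (hpowγ _ _).1 h2⟩
  -- part 1
  have key : ∀ i i', i < i' → i' < s →
      minpoly F (β ^ k ^ (v + i)) = minpoly F (β ^ k ^ (v + i')) → False := by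
    intro i i' hii hi's hmin
    obtain ⟨t, hcongr⟩ := hconj i i' hmin
    have h4 : k ^ i * k ^ (i' - i) ≡ k ^ i * Fintype.card F ^ t [MOD r] := by
      rw [← pow_add, Nat.add_sub_cancel' hii.le]
      exact hcongr
    have h5 : k ^ (i' - i) ≡ Fintype.card F ^ t [MOD r] :=
      Nat.ModEq.cancel_left_of_coprime ((Nat.Coprime.pow_left i hgcd).symm) h4
    have h6 : s ≤ i' - i := hmem _ (Nat.sub_pos_of_lt hii) ⟨t, h5⟩
    omega
  have part1 : ∀ i i' : ℕ, i < s → i' < s → i ≠ i' →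
      minpoly F (β ^ k ^ (v + i)) ≠ minpoly F (β ^ k ^ (v + i')) := by
    intro i i' hi hi' hne hmin
    rcases hne.lt_or_gt with h | h
    · exact key i i' h hi' hmin
    · exact key i' i h hi hmin.symm
  obtain ⟨hs_pos, j, hj, hcong⟩ := hs.1
  -- part 2
  have part2 : minpoly F (β ^ k ^ (v + s)) = minpoly F (β ^ k ^ v) := by
    have h1 : (β ^ k ^ v) ^ k ^ s = (β ^ k ^ v) ^ Fintype.card F ^ j := (hpowγ _ _).2 hcong
    rw [hβpow s, h1]
    exact minpoly_pow_card_pow _ j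
  -- part 3 : the order computation
  have hkr : Nat.Coprime k r := hgcd
  have hqrcop : Nat.Coprime (Fintype.card F) r := by
    have : IsOfFinOrder ((Fintype.card F : ZMod r)) := by
      refine isOfFinOrder_iff_pow_eq_one.2 ⟨n, hn, ?_⟩
      have h := (ZMod.natCast_eq_natCast_iff _ _ _).2 hone
      push_cast at h
      exact h
    exact (ZMod.isUnit_iff_coprime _ _).1 this.isUnit
  set U : (ZMod r)ˣ := ZMod.unitOfCoprime k hkr with hU
  set W : (ZMod r)ˣ := ZMod.unitOfCoprime _ hqrcop with hW
  have hUk : orderOf (k : ZMod r) = orderOf U := by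
    rw [← orderOf_units, ZMod.coe_unitOfCoprime]
  have hWm : orderOf W = m := by
    rw [hmdef, ← orderOf_units, ZMod.coe_unitOfCoprime]
  set c := orderOf U with hc
  have hc0 : 0 < c := orderOf_pos U
  have hcongZ : ((k : ZMod r)) ^ s = ((Fintype.card F : ZMod r)) ^ j := by
    have h := (ZMod.natCast_eq_natCast_iff _ _ _).2 hcong
    push_cast at h
    exact h
  have hUs : U ^ s = W ^ j := by
    apply Units.ext
    simpa [ZMod.coe_unitOfCoprime, hU, hW] using hcongZ
  have hs0 : 0 < s := hs_pos
  -- s divides c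
  have hsc : s ∣ c := by
    rcases Nat.eq_zero_or_pos (c % s) with h0 | hpos
    · exact Nat.dvd_of_mod_eq_zero h0
    · exfalso
      set a := j * (c / s) with ha
      have hWa : (W ^ j) ^ (c / s) = W ^ a := by rw [ha, pow_mul]
      have h2 : W ^ a * U ^ (c % s) = 1 := by
        rw [← hWa, ← hUs, ← pow_mul, ← pow_add, Nat.div_add_mod, hc]
        exact pow_orderOf_eq_one U
      have hexp : a + (m - 1) * a = m * a := by
        have hle : a ≤ m * a := Nat.le_mul_of_pos_left a hm
        rw [Nat.sub_one_mul]
        omega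
      have h3 : W ^ a * U ^ (c % s) = W ^ a * W ^ ((m - 1) * a) := by
        rw [h2, ← pow_add, hexp, pow_mul, ← hWm, pow_orderOf_eq_one, one_pow]
      have h4 : U ^ (c % s) = W ^ ((m - 1) * a) := mul_left_cancel h3
      have h5 : k ^ (c % s) ≡ Fintype.card F ^ ((m - 1) * a) [MOD r] := by
        rw [← ZMod.natCast_eq_natCast_iff]
        push_cast
        have h6 := congrArg (Units.val) h4
        simpa [ZMod.coe_unitOfCoprime, hU, hW] using h6
      have h6 : s ≤ c % s := hmem _ hpos ⟨_, h5⟩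
      have h7 : c % s < s := Nat.mod_lt _ hs0
      omega
  have hordk : orderOf ((Fintype.card F : ZMod r) ^ j) = orderOf (U ^ s) := by
    have hval : ((Fintype.card F : ZMod r)) ^ j = ((U ^ s : (ZMod r)ˣ) : ZMod r) := by
      simp [ZMod.coe_unitOfCoprime, ← hcongZ, hU]
    rw [hval, orderOf_units]
  have hdc : orderOf (U ^ s) = c / s := by
    rw [orderOf_pow U, ← hc, Nat.gcd_comm, Nat.gcd_eq_left hsc]
  have hsd : s = c / orderOf (U ^ s) := by
    rw [hdc, Nat.div_div_self hsc hc0.ne']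
  refine ⟨part1, part2, j, hj, hcong, ?_, ?_⟩
  · rw [hUk, hordk]
    exact hsd
  · rw [hdegγ, hmdef]
    exact orderOf_pow_dvd j
end
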